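/- arXiv:2410.00701 — 8 statements merged into one kernel-verified Lean document; each statement's English description precedes it below -/
import Mathlib

section
/- Let k ≥ 5 be an odd integer and let the alternating group A_k act naturally on X = ℤ/kℤ (as even permutations of the k-element set X). Regard the F₂-vector space of functions X → F₂ as an A_k-module via (σ·f)(x) = f(σ⁻¹(x)). Then every 1-cocycle ω : A_k → (X → F₂) is a 1-coboundary; equivalently, H¹(A_k, F₂[X]) = 0. -/
/-- `H¹(A_k, F₂[X]) = 0` for odd `k ≥ 5`, where `X = ℤ/kℤ` and the alternating group acts
naturally: every 1-cocycle of `A_k` with values in the module of functions `X → F₂`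
(with action `(σ·f)(x) = f(σ⁻¹ x)`) is a 1-coboundary. -/
theorem h1_alternatingGroup_functions_to_F2_vanishes
    (k : ℕ) [NeZero k] (hk : 5 ≤ k) (hodd : Odd k)
    (ω : alternatingGroup (ZMod k) → (ZMod k → ZMod 2))
    (hcoc : ∀ σ τ : alternatingGroup (ZMod k),
      ω (σ * τ) = (fun x => ω τ ((σ : Equiv.Perm (ZMod k))⁻¹ x)) + ω σ) :
    ∃ ν : ZMod k → ZMod 2, ∀ σ : alternatingGroup (ZMod k),
      ω σ = (fun x => ν ((σ : Equiv.Perm (ZMod k))⁻¹ x)) - ν := by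
  classical
  haveI : Fact (1 < k) := ⟨by omega⟩
  -- the cocycle vanishes at 1
  have hone : ω 1 = 0 := by
    funext x
    have h := congrFun (hcoc 1 1) x
    simp only [mul_one, Pi.add_apply, OneMemClass.coe_one, inv_one,
      Equiv.Perm.one_apply] at h
    have key : ∀ a : ZMod 2, a = a + a → a = 0 := by decide
    exact key _ h
  -- additivity at 0 when the left factor fixes 0
  have hF : ∀ σ τ : alternatingGroup (ZMod k), (σ : Equiv.Perm (ZMod k)) 0 = 0 →
      ω (σ * τ) 0 = ω τ 0 + ω σ 0 := by
    intro σ τ hσ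
    have h := congrFun (hcoc σ τ) 0
    simp only [Pi.add_apply] at h
    have hinv : (σ : Equiv.Perm (ZMod k))⁻¹ 0 = 0 := by
      conv_lhs => rw [← hσ]
      exact Equiv.symm_apply_apply _ _
    rw [hinv] at h
    exact h
  -- the cocycle vanishes at 0 on elements fixing 0
  have hfix : ∀ σ : alternatingGroup (ZMod k), (σ : Equiv.Perm (ZMod k)) 0 = 0 →
      ω σ 0 = 0 := by
    intro σ hσ0
    set p : Equiv.Perm (ZMod k) := (σ : Equiv.Perm (ZMod k)) with hp
    have h₁ : ∀ x : ZMod k, x ≠ 0 ↔ p x ≠ 0 := by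
      intro x
      constructor
      · intro hx h
        exact hx (by rw [← hσ0] at h; exact p.injective h)
      · intro hx h
        exact hx (by rw [h, hσ0])
    set g : Equiv.Perm {x : ZMod k // x ≠ 0} := p.subtypePerm (fun x => (h₁ x).symm) with hg
    have hog : Equiv.Perm.ofSubtype g = p :=
      Equiv.Perm.ofSubtype_subtypePerm (fun x => (h₁ x).symm) (fun x hx => by
        intro h0; apply hx; rw [h0, hσ0])
    -- key claim via closure induction over three-cycles
    have key : ∀ g' : Equiv.Perm {x : ZMod k // x ≠ 0},
        g' ∈ Subgroup.closure {σ : Equiv.Perm {x : ZMod k // x ≠ 0} | σ.IsThreeCycle} →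
        ∃ hg' : Equiv.Perm.ofSubtype g' ∈ alternatingGroup (ZMod k),
          ω ⟨Equiv.Perm.ofSubtype g', hg'⟩ 0 = 0 := by
      intro g' hg'
      induction hg' using Subgroup.closure_induction with
      | mem x hx =>
        have hmem : Equiv.Perm.ofSubtype x ∈ alternatingGroup (ZMod k) := by
          rw [Equiv.Perm.mem_alternatingGroup, Equiv.Perm.sign_ofSubtype]
          exact hx.sign
        refine ⟨hmem, ?_⟩
        set q : alternatingGroup (ZMod k) := ⟨Equiv.Perm.ofSubtype x, hmem⟩ with hq
        have hq0 : (q : Equiv.Perm (ZMod k)) 0 = 0 :=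
          Equiv.Perm.ofSubtype_apply_of_not_mem x (by simp)
        have h3 : q * (q * q) = 1 := by
          have hx3 : x ^ 3 = 1 := by
            rw [← Equiv.Perm.IsThreeCycle.orderOf hx]; exact pow_orderOf_eq_one x
          have hq3 : q ^ 3 = 1 := by
            ext1
            push_cast [hq]
            rw [← map_pow, hx3, map_one]
          calc q * (q * q) = q ^ 3 := by rw [pow_succ, pow_two, mul_assoc]
          _ = 1 := hq3
        have e1 : ω (q * (q * q)) 0 = ω (q * q) 0 + ω q 0 := hF q (q * q) hq0
        have e2 : ω (q * q) 0 = ω q 0 + ω q 0 := hF q q hq0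
        rw [h3, hone] at e1
        simp only [Pi.zero_apply] at e1
        have hself : ω q 0 + ω q 0 = 0 := by
          have : (2 : ZMod 2) = 0 := by decide
          calc ω q 0 + ω q 0 = 2 * ω q 0 := by ring
          _ = 0 := by rw [this, zero_mul]
        rw [e2, hself, zero_add] at e1
        exact e1.symm
      | one =>
        refine ⟨by simp, ?_⟩
        have : (⟨Equiv.Perm.ofSubtype (1 : Equiv.Perm {x : ZMod k // x ≠ 0}), by simp⟩ :
            alternatingGroup (ZMod k)) = 1 := by ext1; simp
        rw [this, hone]; rfl
      | mul a b _ _ iha ihb =>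
        obtain ⟨ha, ha0⟩ := iha
        obtain ⟨hb, hb0⟩ := ihb
        have hmem : Equiv.Perm.ofSubtype (a * b) ∈ alternatingGroup (ZMod k) := by
          rw [map_mul]; exact mul_mem ha hb
        refine ⟨hmem, ?_⟩
        have heq : (⟨Equiv.Perm.ofSubtype (a * b), hmem⟩ : alternatingGroup (ZMod k)) =
            ⟨Equiv.Perm.ofSubtype a, ha⟩ * ⟨Equiv.Perm.ofSubtype b, hb⟩ := by
          ext1; push_cast; exact map_mul _ _ _
        rw [heq, hF _ _ (Equiv.Perm.ofSubtype_apply_of_not_mem a (by simp)), ha0, hb0,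
          add_zero]
      | inv a _ iha =>
        obtain ⟨ha, ha0⟩ := iha
        have hmem : Equiv.Perm.ofSubtype a⁻¹ ∈ alternatingGroup (ZMod k) := by
          rw [map_inv]; exact inv_mem ha
        refine ⟨hmem, ?_⟩
        have heq : (⟨Equiv.Perm.ofSubtype a⁻¹, hmem⟩ : alternatingGroup (ZMod k)) =
            (⟨Equiv.Perm.ofSubtype a, ha⟩ : alternatingGroup (ZMod k))⁻¹ := by
          ext1; push_cast; exact map_inv _ _
        have h1 : (⟨Equiv.Perm.ofSubtype a⁻¹, hmem⟩ : alternatingGroup (ZMod k)) *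
            ⟨Equiv.Perm.ofSubtype a, ha⟩ = 1 := by rw [heq, inv_mul_cancel]
        have e := hF (⟨Equiv.Perm.ofSubtype a⁻¹, hmem⟩) (⟨Equiv.Perm.ofSubtype a, ha⟩)
          (by exact Equiv.Perm.ofSubtype_apply_of_not_mem a⁻¹ (by simp))
        rw [h1, hone] at e
        simp only [Pi.zero_apply] at e
        rw [ha0, zero_add] at e
        exact e.symm
    have hgmem : g ∈ Subgroup.closure
        {σ : Equiv.Perm {x : ZMod k // x ≠ 0} | σ.IsThreeCycle} := by
      rw [Equiv.Perm.closure_three_cycles_eq_alternating, Equiv.Perm.mem_alternatingGroup,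
        ← Equiv.Perm.sign_ofSubtype, hog]
      exact σ.2
    obtain ⟨hg', h0⟩ := key g hgmem
    have : (⟨Equiv.Perm.ofSubtype g, hg'⟩ : alternatingGroup (ZMod k)) = σ := by
      ext1
      exact hog.trans hp
    rwa [this] at h0
  -- translations are even
  have memA : ∀ x : ZMod k, Equiv.addLeft x ∈ alternatingGroup (ZMod k) := by
    have hpow : ∀ n : ℕ, (Equiv.addLeft (1 : ZMod k)) ^ n = Equiv.addLeft (n : ZMod k) := by
      intro n
      induction n with
      | zero => ext z; simp
      | succ m ih =>
        ext z
        rw [pow_succ]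
        simp only [Equiv.Perm.mul_apply, ih]
        show (m : ZMod k) + ((1 : ZMod k) + z) = ((m + 1 : ℕ) : ZMod k) + z
        push_cast
        ring
    have hcyc : Equiv.Perm.IsCycle (Equiv.addLeft (1 : ZMod k)) := by
      refine ⟨0, ?_, ?_⟩
      · show (1 : ZMod k) + 0 ≠ 0
        rw [add_zero]
        exact one_ne_zero
      · intro y _
        refine ⟨(y.val : ℤ), ?_⟩
        rw [zpow_natCast, hpow]
        simp [ZMod.natCast_val, ZMod.cast_id]
    have hsupp : (Equiv.addLeft (1 : ZMod k)).support = Finset.univ := by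
      ext z
      simp only [Equiv.Perm.mem_support, Finset.mem_univ, iff_true]
      intro h
      have h' : (1 : ZMod k) + z = z := h
      exact one_ne_zero (by linear_combination h')
    have hsign1 : Equiv.Perm.sign (Equiv.addLeft (1 : ZMod k)) = 1 := by
      rw [hcyc.sign, hsupp]
      simp only [Finset.card_univ, ZMod.card]
      rw [hodd.neg_one_pow, neg_neg]
    intro x
    rw [Equiv.Perm.mem_alternatingGroup]
    have : Equiv.addLeft x = (Equiv.addLeft (1 : ZMod k)) ^ x.val := by
      rw [hpow]
      simp [ZMod.natCast_val, ZMod.cast_id]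
    rw [this, map_pow, hsign1, one_pow]
  -- the candidate coboundary
  refine ⟨fun x => ω ⟨Equiv.addLeft x, memA x⟩ x, ?_⟩
  intro σ
  funext x
  set y : ZMod k := (σ : Equiv.Perm (ZMod k))⁻¹ x with hy
  set sx : alternatingGroup (ZMod k) := ⟨Equiv.addLeft x, memA x⟩ with hsx
  set sy : alternatingGroup (ZMod k) := ⟨Equiv.addLeft y, memA y⟩ with hsy
  set h : alternatingGroup (ZMod k) := sx⁻¹ * σ * sy with hh
  have hsxinv : ((sx : Equiv.Perm (ZMod k)))⁻¹ x = 0 := by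
    show (Equiv.addLeft x)⁻¹ x = 0
    show (Equiv.addLeft (-x)) x = 0
    show -x + x = 0
    rw [neg_add_cancel]
  have hh0 : (h : Equiv.Perm (ZMod k)) 0 = 0 := by
    have hc : (h : Equiv.Perm (ZMod k)) 0 = ((sx : Equiv.Perm (ZMod k)))⁻¹
        ((σ : Equiv.Perm (ZMod k)) ((Equiv.addLeft y) 0)) := rfl
    rw [hc]
    have : (Equiv.addLeft y) (0 : ZMod k) = y := by
      show y + 0 = y
      rw [add_zero]
    rw [this, hy]
    rw [show (σ : Equiv.Perm (ZMod k)) ((σ : Equiv.Perm (ZMod k))⁻¹ x) = x from Equiv.apply_symm_apply _ _]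
    exact hsxinv
  have key1 := congrFun (hcoc σ sy) x
  have key2 := congrFun (hcoc sx h) x
  simp only [Pi.add_apply] at key1 key2
  have hprod : σ * sy = sx * h := by
    rw [hh]; group
  rw [hprod] at key1
  rw [key2, hsxinv, hfix h hh0] at key1
  -- key1 : 0 + ω sx x = ω sy (σ⁻¹ x) + ω σ x
  have hsyy : ω sy ((σ : Equiv.Perm (ZMod k))⁻¹ x) = ω sy y := by rw [← hy]
  rw [hsyy, zero_add] at key1
  -- goal : ω σ x = ν (σ⁻¹ x) - ν x
  show ω σ x = ω sy y - ω sx x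
  have htwo : ∀ a b c : ZMod 2, a = b + c → c = b - a := by decide
  exact htwo _ _ _ key1
end

section
/- Let S be a non-abelian simple group and identify S with the subgroup Inn(S) ≤ Aut(S) of inner automorphisms (s corresponds to the map x ↦ s x s⁻¹). Let G be a group with Inn(S) ≤ G ≤ Aut(S), and assume every automorphism of G maps the subgroup Inn(S) onto itself (this holds in particular when Inn(S) is the socle of G). Then for every automorphism ψ of G there exists φ ∈ Aut(S) such that ψ(g) = φ ∘ g ∘ φ⁻¹ for all g ∈ G; consequently the restriction map Aut(G) → Aut(Inn(S)) is injective and, up to these identifications, G ≤ Aut(G) ≤ Aut(S). -/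
/-- Let `S` be a non-abelian simple group, `Inn(S) ≤ G ≤ Aut(S)` (with `Inn(S)` the range of
the conjugation homomorphism `MulAut.conj`), and suppose an automorphism `ψ` of `G` maps
`Inn(S)` onto itself. Then `ψ` is induced by conjugation by some `φ ∈ Aut(S)`; moreover any
two such automorphisms of `G` agreeing on `Inn(S)` are equal (so the restriction map
`Aut(G) → Aut(Inn(S))` is injective). -/
theorem aut_of_group_between_inn_and_aut
    (S : Type*) [Group S] (hS : IsSimpleGroup S) (hna : ¬ ∀ a b : S, a * b = b * a)
    (G : Subgroup (MulAut S))
    (hInn : (MulAut.conj : S →* MulAut S).range ≤ G)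
    (ψ : G ≃* G)
    (hψInn : ∀ g : G, (g : MulAut S) ∈ (MulAut.conj : S →* MulAut S).range ↔
      ((ψ g : G) : MulAut S) ∈ (MulAut.conj : S →* MulAut S).range) :
    (∃ φ : MulAut S, ∀ g : G, ((ψ g : G) : MulAut S) = φ * (g : MulAut S) * φ⁻¹) ∧
    ∀ ψ' : G ≃* G,
      (∀ g : G, (g : MulAut S) ∈ (MulAut.conj : S →* MulAut S).range ↔
        ((ψ' g : G) : MulAut S) ∈ (MulAut.conj : S →* MulAut S).range) →
      (∀ g : G, (g : MulAut S) ∈ (MulAut.conj : S →* MulAut S).range → ψ g = ψ' g) →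
      ∀ g : G, ψ g = ψ' g := by
  classical
  set c : S →* MulAut S := MulAut.conj with hc
  -- conjugation is injective since the center is trivial
  have hinj : Function.Injective c := by
    intro a b hab
    have h : ∀ x : S, a * x * a⁻¹ = b * x * b⁻¹ := by
      intro x
      have := congrArg (fun (f : MulAut S) => f x) hab
      simpa [hc, MulAut.conj_apply] using this
    have hcen : b⁻¹ * a ∈ Subgroup.center S := by
      rw [Subgroup.mem_center_iff]
      intro x
      calc x * (b⁻¹ * a) = b⁻¹ * (b * x * b⁻¹) * a := by group
        _ = b⁻¹ * (a * x * a⁻¹) * a := by rw [h x]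
        _ = b⁻¹ * a * x := by group
    have hZ : Subgroup.center S = ⊥ := by
      rcases hS.eq_bot_or_eq_top_of_normal (Subgroup.center S) inferInstance with h' | h'
      · exact h'
      · exfalso
        apply hna
        intro x y
        have hy : y ∈ Subgroup.center S := h' ▸ Subgroup.mem_top y
        exact Subgroup.mem_center_iff.mp hy x
    have : b⁻¹ * a = 1 := by
      have := hZ ▸ hcen
      simpa using this
    have : a = b := by
      have := congrArg (fun z => b * z) this
      simpa using this
    exact this
  -- key conjugation identity in `MulAut S`
  have hkey : ∀ (α : MulAut S) (s : S), α * c s * α⁻¹ = c (α s) := by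
    intro α s
    ext x
    simp [hc, MulAut.conj_apply, mul_assoc]
  -- the element of `G` corresponding to `conj s`
  have hmemG : ∀ s : S, c s ∈ G := fun s => hInn ⟨s, rfl⟩
  set e : S → G := fun s => ⟨c s, hmemG s⟩ with he
  have hemul : ∀ s t : S, e (s * t) = e s * e t := by
    intro s t; ext; simp [he, map_mul]
  have hmem : ∀ s : S, ((ψ (e s) : G) : MulAut S) ∈ c.range :=
    fun s => (hψInn (e s)).mp ⟨s, rfl⟩
  set f : S → S := fun s => (hmem s).choose with hf
  have hfspec : ∀ s : S, c (f s) = ((ψ (e s) : G) : MulAut S) := fun s => (hmem s).choose_spec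
  have hfmul : ∀ s t : S, f (s * t) = f s * f t := by
    intro s t
    apply hinj
    rw [map_mul, hfspec, hfspec, hfspec, hemul, map_mul]
    rfl
  have hfinj : Function.Injective f := by
    intro s t hst
    have : ψ (e s) = ψ (e t) := by
      apply Subtype.ext
      rw [← hfspec, ← hfspec, hst]
    have hee : e s = e t := ψ.injective this
    have : c s = c t := congrArg Subtype.val hee
    exact hinj this
  have hfsurj : Function.Surjective f := by
    intro t
    set g : G := ψ.symm (e t) with hg
    have hgInn : (g : MulAut S) ∈ c.range := by
      apply (hψInn g).mpr
      have : ψ g = e t := by rw [hg]; exact ψ.apply_symm_apply _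
      rw [this]
      exact ⟨t, rfl⟩
    obtain ⟨s, hs⟩ := hgInn
    refine ⟨s, hinj ?_⟩
    rw [hfspec]
    have hes : e s = g := Subtype.ext hs
    rw [hes, hg, ψ.apply_symm_apply]
  set φ : MulAut S := MulEquiv.ofBijective (MonoidHom.mk' f hfmul) ⟨hfinj, hfsurj⟩ with hφ
  have hφapp : ∀ s : S, φ s = f s := fun s => rfl
  have hφconj : ∀ s : S, c (φ s) = ((ψ (e s) : G) : MulAut S) := fun s => hfspec s
  -- main computation: ψ g acts as conjugation by φ
  have hmain : ∀ g : G, ((ψ g : G) : MulAut S) = φ * (g : MulAut S) * φ⁻¹ := by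
    intro g
    have hpt : ∀ s : S, ((ψ g : G) : MulAut S) (φ s) = φ ((g : MulAut S) s) := by
      intro s
      apply hinj
      rw [← hkey ((ψ g : G) : MulAut S) (φ s), hφconj, hφconj]
      have hconjg : g * e s * g⁻¹ = e ((g : MulAut S) s) := by
        ext
        push_cast
        rw [hkey]
      rw [← hconjg, map_mul, map_mul, map_inv]
      push_cast
      rfl
    ext x
    calc ((ψ g : G) : MulAut S) x = ((ψ g : G) : MulAut S) (φ (φ⁻¹ x)) := by
          rw [MulAut.apply_inv_self]
      _ = φ ((g : MulAut S) (φ⁻¹ x)) := hpt (φ⁻¹ x)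
      _ = (φ * (g : MulAut S) * φ⁻¹) x := rfl
  refine ⟨⟨φ, hmain⟩, ?_⟩
  -- uniqueness
  intro ψ' _hψ'Inn hagree g
  have hagree' : ∀ s : S, ψ (e s) = ψ' (e s) := fun s => hagree (e s) ⟨s, rfl⟩
  apply Subtype.ext
  -- show the two automorphisms of S agree pointwise
  ext x
  obtain ⟨s, hs⟩ := hfsurj x
  have hconjg : ∀ s : S, g * e s * g⁻¹ = e ((g : MulAut S) s) := by
    intro s; ext; push_cast; rw [hkey]
  have h1 : ψ (g * e s * g⁻¹) = ψ' (g * e s * g⁻¹) :=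
    hagree _ (by rw [hconjg]; exact ⟨(g : MulAut S) s, rfl⟩)
  have h2 : (ψ g) * ψ (e s) * (ψ g)⁻¹ = (ψ' g) * ψ (e s) * (ψ' g)⁻¹ := by
    have h1' := h1
    simp only [map_mul, map_inv] at h1'
    rw [← hagree' s] at h1'
    exact h1'
  have h3 : ((ψ g : G) : MulAut S) * c (f s) * ((ψ g : G) : MulAut S)⁻¹
      = ((ψ' g : G) : MulAut S) * c (f s) * ((ψ' g : G) : MulAut S)⁻¹ := by
    have h2' := congrArg (Subtype.val) h2
    push_cast at h2'
    rw [hfspec s]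
    exact h2'
  rw [hkey, hkey] at h3
  have h4 : ((ψ g : G) : MulAut S) (f s) = ((ψ' g : G) : MulAut S) (f s) := hinj h3
  rw [hs] at h4
  exact h4
end

section
/- The projective special linear group PSL₂(F₁₁), i.e. the quotient of SL₂(ℤ/11ℤ) by its center, has order 660 and contains no subgroup isomorphic to the dihedral group of order 22. -/
open Matrix

set_option maxRecDepth 10000

namespace Psl2F11Aux

abbrev F11 := ZMod 11
abbrev M2 := Matrix (Fin 2) (Fin 2) F11
abbrev SL11 := SpecialLinearGroup (Fin 2) (ZMod 11)
abbrev PSL11 := Matrix.ProjectiveSpecialLinearGroup (Fin 2) (ZMod 11)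

/-! ### Cardinality -/

lemma card_GL11 : Nat.card (GL (Fin 2) (ZMod 11)) = 13200 := by
  haveI : Fact (Nat.Prime 11) := ⟨by norm_num⟩
  have h := Matrix.card_GL_field (𝔽 := ZMod 11) 2
  rw [h, Fin.prod_univ_two, ZMod.card]
  norm_num

lemma det_surj :
    Function.Surjective (GeneralLinearGroup.det : GL (Fin 2) (ZMod 11) →* (ZMod 11)ˣ) := by
  intro u
  refine ⟨⟨!![u.val, 0; 0, 1], !![u.inv, 0; 0, 1], ?_, ?_⟩, ?_⟩
  · rw [Matrix.mul_fin_two, Matrix.one_fin_two]; congr 1; simp [u.val_inv]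
  · rw [Matrix.mul_fin_two, Matrix.one_fin_two]; congr 1; simp [u.inv_val]
  · ext
    simp [GeneralLinearGroup.det, Matrix.det_fin_two]

def slEquivKer : SL11 ≃ (GeneralLinearGroup.det : GL (Fin 2) (ZMod 11) →* (ZMod 11)ˣ).ker where
  toFun A := ⟨SpecialLinearGroup.toGL A, by
    ext; simpa [MonoidHom.mem_ker] using SpecialLinearGroup.coeToGL_det A⟩
  invFun g := ⟨g.1.1, by
    have : GeneralLinearGroup.det g.1 = 1 := g.2
    simpa [GeneralLinearGroup.det, Units.ext_iff] using this⟩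
  left_inv A := rfl
  right_inv g := Subtype.ext (Units.ext rfl)

lemma card_SL11 : Nat.card SL11 = 1320 := by
  have h1 := Subgroup.card_eq_card_quotient_mul_card_subgroup
    (GeneralLinearGroup.det : GL (Fin 2) (ZMod 11) →* (ZMod 11)ˣ).ker
  have h2 : Nat.card (GL (Fin 2) (ZMod 11) ⧸
      (GeneralLinearGroup.det : GL (Fin 2) (ZMod 11) →* (ZMod 11)ˣ).ker) = 10 := by
    rw [Nat.card_congr (QuotientGroup.quotientKerEquivOfSurjective _ det_surj).toEquiv,
      Nat.card_eq_fintype_card]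
    decide
  rw [card_GL11, h2] at h1
  rw [Nat.card_congr slEquivKer]
  omega

def centerEquiv : Subgroup.center SL11 ≃ {r : ZMod 11 // r ^ 2 = 1} where
  toFun A := ⟨A.1.1 0 0, by
    have h := SpecialLinearGroup.scalar_eq_self_of_mem_center A.2 0
    have hd : det ((scalar (Fin 2)) (A.1.1 0 0)) = 1 := by rw [h]; exact A.1.2
    simpa using hd⟩
  invFun r := ⟨⟨scalar (Fin 2) r.1, by simpa using r.2⟩,
    Matrix.SpecialLinearGroup.mem_center_iff.mpr ⟨r.1, by simpa using r.2, rfl⟩⟩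
  left_inv A := by
    have h := SpecialLinearGroup.scalar_eq_self_of_mem_center A.2 0
    exact Subtype.ext (Subtype.ext h)
  right_inv r := by ext; simp

lemma card_center : Nat.card (Subgroup.center SL11) = 2 := by
  rw [Nat.card_congr centerEquiv, Nat.card_eq_fintype_card]
  decide

lemma card_PSL11 : Nat.card PSL11 = 660 := by
  have h := Subgroup.card_eq_card_quotient_mul_card_subgroup (Subgroup.center SL11)
  rw [card_SL11, card_center] at h
  show Nat.card (SL11 ⧸ Subgroup.center SL11) = 660
  omega

/-! ### decide facts over `ZMod 11` -/

def pseq (t : F11) (n : ℕ) : F11 × F11 :=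
  Nat.rec ((0 : F11), (1 : F11)) (fun _ p => (p.2, t * p.2 - p.1)) n


lemma d1 : ∀ s : F11, s * s = 1 → s = 1 ∨ s = -1 := by decide
lemma d2 : ∀ t σ : F11, (σ = 1 ∨ σ = -1) → (pseq t 10).2 = 0 → (pseq t 10).1 = -σ →
    t = σ + σ := by decide
lemma d3 : ∀ u q : F11, u * u = -(q * q) → q = 0 := by decide
lemma d5 : ∀ a : F11, a + a = 0 → a = 0 := by decide
lemma d6 : ∀ σ : F11, (σ = 1 ∨ σ = -1) → σ + σ ≠ 0 := by decide
lemma d7 : ∀ a b : F11, a * b = 0 → a = 0 ∨ b = 0 := by decide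
lemma exists_inv : ∀ c : F11, ¬ c = 0 → ∃ u : F11, u * c = 1 := by decide


/-! ### Characterisation of the center -/

lemma center_iff {A : SL11} :
    A ∈ Subgroup.center SL11 ↔ (A.1 = 1 ∨ A.1 = (-1 : M2)) := by
  rw [Matrix.SpecialLinearGroup.mem_center_iff]
  constructor
  · rintro ⟨r, hr, hrA⟩
    have hr2 : r * r = 1 := by
      have : r ^ 2 = 1 := by simpa using hr
      rwa [pow_two] at this
    rcases d1 r hr2 with rfl | rfl
    · left; rw [← hrA]; simp
    · right; rw [← hrA, _root_.map_neg, _root_.map_one]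
  · rintro (h | h)
    · exact ⟨1, by norm_num, by simp [h]⟩
    · exact ⟨-1, by norm_num, by rw [_root_.map_neg, _root_.map_one, h]⟩

/-! ### Cayley–Hamilton machinery -/

lemma cayley (M : M2) (hd : det M = 1) : M * M = trace M • M - 1 := by
  have hd' : M 0 0 * M 1 1 - M 0 1 * M 1 0 = 1 := by rw [← det_fin_two]; exact hd
  ext i j
  fin_cases i <;> fin_cases j <;>
    simp [Matrix.mul_apply, Fin.sum_univ_two, trace_fin_two, Matrix.one_apply]
  · linear_combination -hd'
  · ring
  · ring
  · linear_combination -hd'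

lemma pow_eq (M : M2) (hd : det M = 1) (n : ℕ) :
    M ^ (n + 1) = (pseq (trace M) n).2 • M - (pseq (trace M) n).1 • (1 : M2) := by
  induction n with
  | zero => simp [pseq]
  | succ n ih =>
    have h2 : M ^ (n + 2) = M ^ (n + 1) * M := by rw [pow_succ]
    rw [h2, ih, sub_mul, smul_mul_assoc, smul_mul_assoc, one_mul, cayley M hd]
    show _ = (trace M * (pseq (trace M) n).2 - (pseq (trace M) n).1) • M
      - (pseq (trace M) n).2 • (1 : M2)
    module

lemma smul_one_entry (s : F11) : (s • (1 : M2)) 0 0 = s := by simp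
lemma det_smul_one (s : F11) : det (s • (1 : M2)) = s * s := by
  rw [Matrix.det_smul]
  simp [pow_two]

lemma scalar_cases (X : M2) (s : F11) (hX : X = s • (1 : M2)) (hd : det X = 1) :
    X = 1 ∨ X = (-1 : M2) := by
  have : s * s = 1 := by rw [hX, det_smul_one] at hd; exact hd
  rcases d1 s this with rfl | rfl
  · left; rw [hX, one_smul]
  · right; rw [hX, neg_one_smul]

/-! ### The key matrix computation -/

lemma matrix_key (M C Ainv : M2) (σ ε ζ : F11)
    (hdM : det M = 1) (hdC : det C = 1)
    (hσ : σ = 1 ∨ σ = -1) (hε : ε = 1 ∨ ε = -1) (hζ : ζ = 1 ∨ ζ = -1)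
    (hM11 : M ^ 11 = σ • (1 : M2))
    (hM1 : M ≠ 1) (hM2 : M ≠ (-1 : M2))
    (hC2 : C * C = ε • (1 : M2)) (hC1 : C ≠ 1) (hC1' : C ≠ (-1 : M2))
    (hAi : Ainv * M = 1)
    (hrel : Ainv * C = ζ • (C * M)) : False := by
  set t := trace M with ht
  have hch : M * M = t • M - 1 := cayley M hdM
  -- step A : t = σ + σ
  have h11 : (pseq t 10).2 • M - (pseq t 10).1 • (1 : M2) = σ • (1 : M2) := by
    rw [← pow_eq M hdM 10]; exact hM11
  have htσ : t = σ + σ := by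
    by_cases hp : (pseq t 10).2 = 0
    · rw [hp, zero_smul, zero_sub] at h11
      have h00 : -(pseq t 10).1 = σ := by
        have := congrFun (congrFun h11 0) 0
        simpa using this
      exact d2 t σ hσ hp (by linear_combination -h00)
    · exfalso
      obtain ⟨u, hu⟩ := exists_inv _ hp
      have h2 : (pseq t 10).2 • M = (σ + (pseq t 10).1) • (1 : M2) := by
        rw [sub_eq_iff_eq_add] at h11
        rw [h11, ← add_smul]
      have h' : M = (u * (σ + (pseq t 10).1)) • (1 : M2) := by
        have h3 : (u * (pseq t 10).2) • M = u • ((σ + (pseq t 10).1) • (1 : M2)) := by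
          rw [mul_smul, h2]
        rw [hu, one_smul, smul_smul] at h3
        exact h3
      rcases scalar_cases M _ h' hdM with h | h
      · exact hM1 h
      · exact hM2 h
  -- step B : trace C = 0 and C * C = -1
  have hchC : C * C = trace C • C - 1 := cayley C hdC
  have htC : trace C = 0 := by
    by_contra htc
    rcases hε with rfl | rfl
    · -- C * C = 1, so trace C • C = 2 • 1, C scalar
      have h2 : trace C • C = (1 + 1 : F11) • (1 : M2) := by
        rw [hC2, one_smul] at hchC
        rw [eq_sub_iff_add_eq] at hchC
        rw [← hchC]
        module
      obtain ⟨u, hu⟩ := exists_inv _ htc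
      have h' : C = (u * (1 + 1)) • (1 : M2) := by
        have h3 : (u * trace C) • C = u • ((1 + 1 : F11) • (1 : M2)) := by
          rw [mul_smul, h2]
        rw [hu, one_smul, smul_smul] at h3
        exact h3
      rcases scalar_cases C _ h' hdC with h | h
      · exact hC1 h
      · exact hC1' h
    · -- C * C = -1, so trace C • C = 0, C = 0, contradiction with det
      have h2 : trace C • C = 0 := by
        rw [hC2] at hchC
        have hz : (-1 : F11) • (1 : M2) + 1 = 0 := by module
        rw [eq_sub_iff_add_eq] at hchC
        rw [← hchC, hz]
      obtain ⟨u, hu⟩ := exists_inv _ htc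
      have hC0 : C = 0 := by
        have h3 : (u * trace C) • C = u • (0 : M2) := by rw [mul_smul, h2]
        rw [hu, one_smul, smul_zero] at h3
        exact h3
      rw [hC0] at hdC
      have hdz : det (0 : M2) = 0 := by simp
      rw [hdz] at hdC
      exact absurd hdC (by decide)
  have hCC : C * C = (-1 : F11) • (1 : M2) := by
    rcases hε with rfl | rfl
    · exfalso
      rw [hC2, htC, zero_smul, one_smul] at hchC
      have h00 := congrFun (congrFun hchC 0) 0
      simp [Matrix.sub_apply, Matrix.one_apply] at h00
      exact absurd h00 (by decide)
    · exact hC2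
  -- step C : ζ = 1 and the anticommuting relation
  have hAinv : Ainv = t • (1 : M2) - M := by
    have hMr : M * (t • (1 : M2) - M) = 1 := by
      rw [mul_sub, mul_smul_comm, mul_one, hch]
      module
    calc Ainv = Ainv * (M * (t • (1 : M2) - M)) := by rw [hMr, mul_one]
      _ = (Ainv * M) * (t • (1 : M2) - M) := by rw [mul_assoc]
      _ = t • (1 : M2) - M := by rw [hAi, one_mul]
  rw [hAinv] at hrel
  -- multiply hrel on the left by C and take traces to get ζ = 1
  have hζ1 : ζ = 1 := by
    have h3 : C * ((t • (1 : M2) - M) * C) = ζ • (C * (C * M)) := by rw [hrel, mul_smul_comm]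
    have lhs_tr : trace (C * ((t • (1 : M2) - M) * C)) = -t := by
      rw [trace_mul_comm]
      have : (t • (1 : M2) - M) * C * C = (t • (1 : M2) - M) * (C * C) := by rw [mul_assoc]
      rw [this, hCC]
      have : (t • (1 : M2) - M) * ((-1 : F11) • (1 : M2)) = M - t • (1 : M2) := by
        rw [mul_smul_comm, mul_one]; module
      rw [this]
      rw [trace_sub, trace_smul]
      have h2 : trace (1 : M2) = (2 : F11) := by simp
      rw [h2, smul_eq_mul]
      show trace M - trace M * 2 = -trace M
      ring
    have rhs_tr : trace (ζ • (C * (C * M))) = -(ζ * t) := by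
      rw [← mul_assoc, hCC, trace_smul]
      have : (-1 : F11) • (1 : M2) * M = -M := by
        rw [smul_mul_assoc, one_mul]; module
      rw [this, trace_neg]
      show ζ * -trace M = -(ζ * trace M)
      ring
    have := lhs_tr.symm.trans ((congrArg trace h3).trans rhs_tr)
    -- -t = -(ζ * t)
    rcases hζ with h | h
    · exact h
    · exfalso
      rw [h] at this
      have ht0 : t + t = 0 := by linear_combination -this
      apply d6 σ hσ
      rw [← htσ]
      exact d5 t ht0
  rw [hζ1, one_smul] at hrel
  -- anticommuting : C * N = -(N * C) with N = M - σ • 1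
  set N := M - σ • (1 : M2) with hN
  have hanti : C * N + N * C = 0 := by
    have h4 : C * M + M * C = t • C := by
      have : M * C = t • C - C * M := by
        rw [← hrel, sub_mul, smul_mul_assoc, one_mul]
        module
      rw [this]
      module
    rw [hN]
    have expand : C * (M - σ • (1 : M2)) + (M - σ • (1 : M2)) * C
        = (C * M + M * C) - (σ + σ) • C := by
      rw [mul_sub, sub_mul, mul_smul_comm, smul_mul_assoc, mul_one, one_mul]
      module
    rw [expand, h4, htσ]
    module
  -- N is nonzero nilpotent
  have hσ2 : σ * σ = 1 := by rcases hσ with rfl | rfl <;> norm_num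
  have hNN : N * N = 0 := by
    have expand : N * N = M * M - (σ + σ) • M + (σ * σ) • (1 : M2) := by
      simp only [hN, sub_mul, mul_sub, smul_mul_assoc, mul_smul_comm, mul_one,
        one_mul, smul_smul]
      module
    rw [expand, hch, hσ2, ← htσ]
    module
  have hN0 : N ≠ 0 := by
    intro h
    have : M = σ • (1 : M2) := by
      have := sub_eq_zero.mp (hN ▸ h)
      exact this
    rcases scalar_cases M σ this hdM with h | h
    · exact hM1 h
    · exact hM2 h
  -- entry extraction
  have hdetN : det N = 0 := by
    have h0 : det N * det N = 0 := by
      rw [← det_mul, hNN]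
      simp
    rcases d7 _ _ h0 with h | h <;> exact h
  have htrN : trace N = 0 := by
    rw [hN, trace_sub, trace_smul]
    have h2 : trace (1 : M2) = (2 : F11) := by simp
    rw [h2, smul_eq_mul]
    show trace M - σ * 2 = 0
    rw [show trace M = σ + σ from htσ]
    ring
  have hw : C 1 1 = -(C 0 0) := by
    have := trace_fin_two C
    rw [htC] at this
    linear_combination -this
  have hs : N 1 1 = -(N 0 0) := by
    have := trace_fin_two N
    rw [htrN] at this
    linear_combination -this
  have hdC' : C 0 0 * C 1 1 - C 0 1 * C 1 0 = 1 := by rw [← det_fin_two]; exact hdC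
  have hdN' : N 0 0 * N 1 1 - N 0 1 * N 1 0 = 0 := by rw [← det_fin_two]; exact hdetN
  have htrCN : C 0 0 * N 0 0 + C 0 1 * N 1 0 + (C 1 0 * N 0 1 + C 1 1 * N 1 1) = 0 := by
    have h1 : trace (C * N) + trace (N * C) = 0 := by
      rw [← trace_add, hanti, trace_zero]
    rw [trace_mul_comm N C] at h1
    have h2 : trace (C * N) = 0 := d5 _ h1
    rw [trace_fin_two] at h2
    simp only [Matrix.mul_apply, Fin.sum_univ_two] at h2
    linear_combination h2
  -- some entry of N is nonzero
  have hpqr : ¬ (N 0 0 = 0 ∧ N 0 1 = 0 ∧ N 1 0 = 0) := by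
    rintro ⟨h1, h2, h3⟩
    apply hN0
    ext i j
    fin_cases i <;> fin_cases j <;>
      simp only [Matrix.zero_apply]
    · exact h1
    · exact h2
    · exact h3
    · show N 1 1 = (0 : F11)
      rw [hs, h1, neg_zero]
  -- final contradiction
  set p := N 0 0
  set q := N 0 1
  set r := N 1 0
  set x := C 0 0
  set y := C 0 1
  set z := C 1 0
  rw [hs] at hdN' htrCN
  rw [hw] at hdC' htrCN
  by_cases hq : q = 0
  · have hp : p = 0 := by
      have h0 : p * p = 0 := by rw [hq] at hdN'; linear_combination -hdN'
      rcases d7 _ _ h0 with h | h <;> exact h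
    have hr : r ≠ 0 := fun h => hpqr ⟨hp, hq, h⟩
    have hy : y = 0 := by
      have h0 : y * r = 0 := by rw [hp, hq] at htrCN; linear_combination htrCN
      rcases d7 _ _ h0 with h | h
      · exact h
      · exact absurd h hr
    have : x * x = -(1 * 1) := by
      rw [hy] at hdC'
      linear_combination -hdC'
    exact absurd (d3 x 1 this) (by decide)
  · have key : (x * q - p * y) * (x * q - p * y) = -(q * q) := by
      linear_combination (-(q * q)) * hdC' + (-(y * y)) * hdN' + (-(y * q)) * htrCN
    exact hq (d3 _ _ key)

lemma central_scalar {X : SL11} (h : X ∈ Subgroup.center SL11) :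
    ∃ σ : F11, (σ = 1 ∨ σ = -1) ∧ X.1 = σ • (1 : M2) := by
  rcases center_iff.mp h with h | h
  · exact ⟨1, Or.inl rfl, by rw [h, one_smul]⟩
  · exact ⟨-1, Or.inr rfl, by rw [h, neg_one_smul]⟩

lemma psl_key (a b : PSL11) (ha11 : a ^ 11 = 1) (ha1 : a ≠ 1)
    (hb2 : b ^ 2 = 1) (hb1 : b ≠ 1) (hrel : b * a * b⁻¹ = a⁻¹) : False := by
  obtain ⟨A, rfl⟩ := QuotientGroup.mk_surjective a
  obtain ⟨B, rfl⟩ := QuotientGroup.mk_surjective b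
  have hA11 : (A ^ 11 : SL11) ∈ Subgroup.center SL11 := by
    rw [← QuotientGroup.eq_one_iff, QuotientGroup.mk_pow]
    exact ha11
  have hB2 : (B ^ 2 : SL11) ∈ Subgroup.center SL11 := by
    rw [← QuotientGroup.eq_one_iff, QuotientGroup.mk_pow]
    exact hb2
  have hAnc : A ∉ Subgroup.center SL11 := fun h => ha1 ((QuotientGroup.eq_one_iff A).mpr h)
  have hBnc : B ∉ Subgroup.center SL11 := fun h => hb1 ((QuotientGroup.eq_one_iff B).mpr h)
  -- conjugation relation in SL
  have h5 : (QuotientGroup.mk (B * A) : PSL11) = QuotientGroup.mk (A⁻¹ * B) := by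
    rw [QuotientGroup.mk_mul, QuotientGroup.mk_mul, QuotientGroup.mk_inv, ← hrel]
    group
  have hWmem : (B * A)⁻¹ * (A⁻¹ * B) ∈ Subgroup.center SL11 := QuotientGroup.eq.mp h5
  set W : SL11 := (B * A)⁻¹ * (A⁻¹ * B) with hWdef
  have hrelSL : A⁻¹ * B = (B * A) * W := by rw [hWdef]; group
  obtain ⟨σ, hσ, hσeq⟩ := central_scalar hA11
  obtain ⟨ε, hε, hεeq⟩ := central_scalar hB2
  obtain ⟨ζ, hζ, hζeq⟩ := central_scalar hWmem
  have hM11 : (A.1 : M2) ^ 11 = σ • (1 : M2) := by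
    rw [← Matrix.SpecialLinearGroup.coe_pow]; exact hσeq
  have hC2 : (B.1 : M2) * B.1 = ε • (1 : M2) := by
    rw [← Matrix.SpecialLinearGroup.coe_mul, ← pow_two]; exact hεeq
  have hM1 : A.1 ≠ (1 : M2) := fun h => hAnc (center_iff.mpr (Or.inl h))
  have hM2 : A.1 ≠ (-1 : M2) := fun h => hAnc (center_iff.mpr (Or.inr h))
  have hC1 : B.1 ≠ (1 : M2) := fun h => hBnc (center_iff.mpr (Or.inl h))
  have hC1' : B.1 ≠ (-1 : M2) := fun h => hBnc (center_iff.mpr (Or.inr h))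
  have hAi : (A⁻¹).1 * A.1 = (1 : M2) := by
    rw [← Matrix.SpecialLinearGroup.coe_mul, inv_mul_cancel, Matrix.SpecialLinearGroup.coe_one]
  have hrelM : (A⁻¹).1 * B.1 = ζ • (B.1 * A.1) := by
    have := congrArg (fun X : SL11 => X.1) hrelSL
    simp only [Matrix.SpecialLinearGroup.coe_mul] at this
    rw [this, hζeq, mul_smul_comm, mul_one]
  exact matrix_key A.1 B.1 (A⁻¹).1 σ ε ζ A.2 B.2 hσ hε hζ hM11 hM1 hM2 hC2 hC1 hC1' hAi hrelM

lemma no_dihedral (H : Subgroup PSL11) (e : H ≃* DihedralGroup 11) : False := by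
  set u : H := e.symm (DihedralGroup.r 1) with hu
  set v : H := e.symm (DihedralGroup.sr 0) with hv
  set a : PSL11 := (u : PSL11) with ha
  set b : PSL11 := (v : PSL11) with hb
  have ha11 : a ^ 11 = 1 := by
    have h1 : (DihedralGroup.r 1 : DihedralGroup 11) ^ 11 = 1 := by decide
    have h2 : u ^ 11 = 1 := by rw [hu, ← _root_.map_pow, h1, _root_.map_one]
    rw [ha, ← SubmonoidClass.coe_pow, h2, OneMemClass.coe_one]
  have hb2 : b ^ 2 = 1 := by
    have h1 : (DihedralGroup.sr 0 : DihedralGroup 11) ^ 2 = 1 := by decide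
    have h2 : v ^ 2 = 1 := by rw [hv, ← _root_.map_pow, h1, _root_.map_one]
    rw [hb, ← SubmonoidClass.coe_pow, h2, OneMemClass.coe_one]
  have ha1 : a ≠ 1 := by
    intro h
    have h2 : u = 1 := by
      apply Subtype.ext
      rw [OneMemClass.coe_one]
      exact h
    have h3 : (DihedralGroup.r 1 : DihedralGroup 11) = 1 := by
      have h4 := congrArg e h2
      rwa [hu, MulEquiv.apply_symm_apply, _root_.map_one] at h4
    exact absurd h3 (by decide)
  have hb1 : b ≠ 1 := by
    intro h
    have h2 : v = 1 := by
      apply Subtype.ext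
      rw [OneMemClass.coe_one]
      exact h
    have h3 : (DihedralGroup.sr 0 : DihedralGroup 11) = 1 := by
      have h4 := congrArg e h2
      rwa [hv, MulEquiv.apply_symm_apply, _root_.map_one] at h4
    exact absurd h3 (by decide)
  have hrel : b * a * b⁻¹ = a⁻¹ := by
    have hd : (DihedralGroup.sr 0) * (DihedralGroup.r 1) * (DihedralGroup.sr 0)⁻¹
        = ((DihedralGroup.r 1)⁻¹ : DihedralGroup 11) := by decide
    have h2 : v * u * v⁻¹ = u⁻¹ := by
      rw [hu, hv, ← _root_.map_inv, ← _root_.map_mul, ← _root_.map_inv, ← _root_.map_mul, hd]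
    have h5 := congrArg (fun x : H => (x : PSL11)) h2
    simp only [Subgroup.coe_mul, InvMemClass.coe_inv] at h5
    rw [ha, hb]
    exact h5
  exact psl_key a b ha11 ha1 hb2 hb1 hrel

end Psl2F11Aux

/-- `PSL₂(F₁₁)` has order `660` and contains no subgroup isomorphic to the dihedral group
of order `22`. -/
theorem psl2_f11_card_and_no_dihedral_22 :
    Nat.card (Matrix.ProjectiveSpecialLinearGroup (Fin 2) (ZMod 11)) = 660 ∧
    ∀ H : Subgroup (Matrix.ProjectiveSpecialLinearGroup (Fin 2) (ZMod 11)),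
      ¬ Nonempty (H ≃* DihedralGroup 11) := by
  constructor
  · exact Psl2F11Aux.card_PSL11
  · rintro H ⟨e⟩
    exact Psl2F11Aux.no_dihedral H e
end

section
/- Let Γ be a finite reduced simple graph on vertex set V, and let (σ₁, σ₂) and (σ₁, σ₂′) be two-fold automorphisms of Γ with the same first coordinate. Then σ₂ = σ₂′. In particular, if (id, σ₂) is a two-fold automorphism of a reduced graph Γ, then σ₂ = id, and the projection (σ₁,σ₂) ↦ σ₁ from the group of two-fold automorphisms of Γ to its image is a group isomorphism. -/
/-- A pair of permutations `(σ₁, σ₂)` is a two-fold automorphism of `Γ` iff adjacency of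
`v, w` is equivalent to adjacency of `σ₁ v, σ₂ w`. -/
def IsTwoFoldAuto {V : Type*} (Γ : SimpleGraph V) (σ₁ σ₂ : Equiv.Perm V) : Prop :=
  ∀ v w : V, Γ.Adj v w ↔ Γ.Adj (σ₁ v) (σ₂ w)

theorem twoFoldAuto_aux
    {V : Type*} (Γ : SimpleGraph V)
    (hred : ∀ v w : V, Γ.neighborSet v = Γ.neighborSet w → v = w)
    (σ₁ σ₂ σ₂' : Equiv.Perm V)
    (h : IsTwoFoldAuto Γ σ₁ σ₂) (h' : IsTwoFoldAuto Γ σ₁ σ₂') :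
    σ₂ = σ₂' := by
  ext w
  apply hred
  ext x
  simp only [SimpleGraph.mem_neighborSet]
  constructor
  · intro hx
    have := (h (σ₁.symm x) w).2
    simp only [Equiv.apply_symm_apply] at this
    have := this (Γ.adj_symm hx)
    have := (h' (σ₁.symm x) w).1 this
    simpa using this.symm
  · intro hx
    have := (h' (σ₁.symm x) w).2
    simp only [Equiv.apply_symm_apply] at this
    have := this (Γ.adj_symm hx)
    have := (h (σ₁.symm x) w).1 this
    simpa using this.symm

/-- In a finite reduced graph, the second coordinate of a two-fold automorphism is
determined by the first; in particular a two-fold automorphism with first coordinate `id`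
has second coordinate `id` (so projecting to the first coordinate is injective, hence an
isomorphism onto its image). -/
theorem twoFoldAuto_second_coordinate_unique
    {V : Type*} [Fintype V] (Γ : SimpleGraph V)
    (hred : ∀ v w : V, Γ.neighborSet v = Γ.neighborSet w → v = w)
    (σ₁ σ₂ σ₂' : Equiv.Perm V)
    (h : IsTwoFoldAuto Γ σ₁ σ₂) (h' : IsTwoFoldAuto Γ σ₁ σ₂') :
    σ₂ = σ₂' ∧ (∀ τ : Equiv.Perm V, IsTwoFoldAuto Γ 1 τ → τ = 1) := by
  refine ⟨twoFoldAuto_aux Γ hred σ₁ σ₂ σ₂' h h', fun τ hτ => ?_⟩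
  exact twoFoldAuto_aux Γ hred 1 τ 1 hτ (fun v w => by simp [IsTwoFoldAuto])
end

section
/- Let m be a positive integer, let S ⊆ ℤ/2mℤ satisfy S = −S and 0 ∉ S, and suppose Γ = Cay(ℤ/2mℤ, S) is reduced. Then the following are equivalent: (i) there exists a two-fold automorphism (σ₁, σ₂) of Γ with σ₂(x) = σ₁(x + m) for all x ∈ ℤ/2mℤ; (ii) Cay(ℤ/2mℤ, S) is isomorphic to Cay(ℤ/2mℤ, S + m), where S + m = {s + m : s ∈ S}. -/
open SimpleGraph

/-- For a reduced circulant `Γ = Cay(ℤ/2mℤ, S)`: there is a two-fold automorphism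
`(σ₁, σ₂)` of `Γ` with `σ₂ x = σ₁(x + m)` for all `x` iff
`Cay(ℤ/2mℤ, S) ≅ Cay(ℤ/2mℤ, S + m)`. -/
theorem twoFoldAuto_add_m_iff_iso_shifted_circulant
    (m : ℕ) (hm : 0 < m)
    (S : Set (ZMod (2 * m))) (hSsymm : ∀ s, s ∈ S ↔ -s ∈ S)
    (hS0 : (0 : ZMod (2 * m)) ∉ S)
    (hred : ∀ v w : ZMod (2 * m),
      (circulantGraph S).neighborSet v = (circulantGraph S).neighborSet w → v = w) :
    (∃ σ₁ σ₂ : Equiv.Perm (ZMod (2 * m)), IsTwoFoldAuto (circulantGraph S) σ₁ σ₂ ∧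
        ∀ x : ZMod (2 * m), σ₂ x = σ₁ (x + (m : ZMod (2 * m)))) ↔
    Nonempty
      (circulantGraph S ≃g circulantGraph ((fun s => s + (m : ZMod (2 * m))) '' S)) := by
  haveI : NeZero (2 * m) := ⟨by omega⟩
  set μ : ZMod (2 * m) := (m : ZMod (2 * m)) with hμ
  set T : Set (ZMod (2 * m)) := (fun s => s + μ) '' S with hT
  -- basic arithmetic facts
  have h2 : μ + μ = 0 := by
    have h := ZMod.natCast_self (2 * m)
    push_cast at h
    rw [hμ]; linear_combination h
  have hnegμ : -μ = μ := neg_eq_of_add_eq_zero_left h2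
  -- adjacency in the S-circulant
  have hadj : ∀ a b : ZMod (2 * m), (circulantGraph S).Adj a b ↔ a - b ∈ S := by
    intro a b
    rw [circulantGraph_adj]
    constructor
    · rintro ⟨hne, h | h⟩
      · exact h
      · have := (hSsymm (b - a)).1 h
        rwa [neg_sub] at this
    · intro h
      refine ⟨fun e => hS0 (by simpa [e] using h), Or.inl h⟩
  -- membership in T
  have hTmem : ∀ x : ZMod (2 * m), x ∈ T ↔ x - μ ∈ S := by
    intro x
    constructor
    · rintro ⟨s, hs, rfl⟩; simpa using hs
    · intro h; exact ⟨x - μ, h, by ring⟩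
  -- adjacency in the T-circulant
  have hBadj : ∀ a b : ZMod (2 * m),
      (circulantGraph T).Adj a b ↔ a ≠ b ∧ a - b - μ ∈ S := by
    intro a b
    rw [circulantGraph_adj]
    refine and_congr_right fun hne => ?_
    rw [hTmem, hTmem]
    constructor
    · rintro (h | h)
      · exact h
      · have := (hSsymm (b - a - μ)).1 h
        have e : -(b - a - μ) = a - b - μ := by linear_combination h2
        rwa [e] at this
    · exact Or.inl
  constructor
  · -- (i) → (ii)
    rintro ⟨σ₁, σ₂, hTF, hσ⟩
    have hTF' : ∀ v w, (circulantGraph S).Adj v w ↔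
        (circulantGraph S).Adj (σ₁ v) (σ₁ (w + μ)) := by
      intro v w
      rw [hTF v w, hσ w]
    -- m ∉ S
    have hmS : μ ∉ S := by
      intro hmem
      have h := (hTF' 0 (0 + μ)).1 ?_
      · rw [show (0:ZMod (2*m)) + μ + μ = 0 by rw [add_assoc, h2, add_zero]] at h
        exact (circulantGraph S).irrefl h
      · rw [hadj]
        rw [show (0:ZMod (2*m)) - (0 + μ) = -μ by ring, hnegμ]
        exact hmem
    refine ⟨⟨σ₁.symm, ?_⟩⟩
    intro a b
    show (circulantGraph T).Adj (σ₁.symm a) (σ₁.symm b) ↔ (circulantGraph S).Adj a b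
    have key : (circulantGraph S).Adj (σ₁.symm a) (σ₁.symm b + μ) ↔
        (circulantGraph S).Adj a b := by
      have h := hTF' (σ₁.symm a) (σ₁.symm b + μ)
      rw [add_assoc, h2, add_zero] at h
      simp only [Equiv.apply_symm_apply] at h
      exact h
    rw [hadj] at key
    rw [hBadj]
    rw [show σ₁.symm a - (σ₁.symm b + μ) = σ₁.symm a - σ₁.symm b - μ by ring] at key
    rw [key]
    constructor
    · exact fun h => h.2
    · intro h
      refine ⟨?_, h⟩
      rw [← key] at h
      intro e
      rw [e] at h
      rw [show σ₁.symm b - σ₁.symm b - μ = -μ by ring, hnegμ] at h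
      exact hmS h
  · -- (ii) → (i)
    rintro ⟨φ⟩
    -- first: m ∉ S, by a degree count
    have hmS : μ ∉ S := by
      intro hmem
      have hcard : ((circulantGraph S).neighborSet 0).ncard =
          ((circulantGraph T).neighborSet (φ 0)).ncard := by
        rw [← Nat.card_coe_set_eq, ← Nat.card_coe_set_eq]
        exact Nat.card_congr (φ.mapNeighborSet 0)
      have hNA : (circulantGraph S).neighborSet 0 = (fun s => -s) '' S := by
        ext y
        simp only [mem_neighborSet, hadj, Set.mem_image]
        constructor
        · intro h; exact ⟨0 - y, h, by ring⟩
        · rintro ⟨s, hs, rfl⟩; simpa using hs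
      have hNB : (circulantGraph T).neighborSet (φ 0) =
          ((fun s => φ 0 - μ - s) '' S) \ {φ 0} := by
        ext y
        simp only [mem_neighborSet, hBadj, Set.mem_diff, Set.mem_image,
          Set.mem_singleton_iff]
        constructor
        · rintro ⟨hne, h⟩
          exact ⟨⟨φ 0 - y - μ, h, by ring⟩, fun e => hne e.symm⟩
        · rintro ⟨⟨s, hs, rfl⟩, hne⟩
          refine ⟨fun e => hne e.symm, ?_⟩
          rw [show φ 0 - (φ 0 - μ - s) - μ = s by ring]
          exact hs
      have hmemimg : φ 0 ∈ (fun s => φ 0 - μ - s) '' S := by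
        refine ⟨μ, hmem, ?_⟩
        show φ 0 - μ - μ = φ 0
        rw [sub_sub, h2, sub_zero]
      have hA : ((circulantGraph S).neighborSet 0).ncard = S.ncard := by
        rw [hNA]
        exact Set.ncard_image_of_injective S neg_injective
      have hB : ((circulantGraph T).neighborSet (φ 0)).ncard = S.ncard - 1 := by
        rw [hNB, Set.ncard_diff_singleton_of_mem hmemimg,
          Set.ncard_image_of_injective S (fun x y h => by
            have h' : φ 0 - μ - x = φ 0 - μ - y := h
            rwa [sub_right_inj] at h')]
      have hpos : 0 < S.ncard := (Set.ncard_pos (Set.toFinite S)).2 ⟨μ, hmem⟩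
      omega
    -- now build the two-fold automorphism
    refine ⟨φ.toEquiv.symm, (Equiv.addRight μ).trans φ.toEquiv.symm, ?_, fun x => rfl⟩
    intro v w
    show (circulantGraph S).Adj v w ↔
      (circulantGraph S).Adj (φ.symm v) (φ.symm (w + μ))
    have hiso : ∀ a b : ZMod (2 * m), (circulantGraph S).Adj (φ.symm a) (φ.symm b) ↔
        (circulantGraph T).Adj a b := by
      intro a b
      have := φ.map_adj_iff (v := φ.symm a) (w := φ.symm b)
      simpa using this.symm
    rw [hiso, hBadj, hadj]
    rw [show v - (w + μ) - μ = v - w - (μ + μ) by ring, h2, sub_zero]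
    constructor
    · intro h
      refine ⟨?_, h⟩
      intro e
      apply hmS
      rw [e] at h
      rw [show w + μ - w = μ by ring] at h
      exact h
    · exact fun h => h.2
end

section
/- Let H be a finite group, S ⊆ H with S = S⁻¹ and e ∉ S, and suppose the Cayley graph Γ = Cay(H, S) is connected and non-bipartite. Identify Γ × K₂ with the graph on H × ℤ/2ℤ in which (g,i) and (h,j) are adjacent iff h g⁻¹ ∈ S and i ≠ j. Then Γ is unstable if and only if the orbit of the vertex (e,1) under the stabilizer of (e,0) in the automorphism group of Γ × K₂ contains a vertex different from (e,1). -/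
/-- The Cayley graph of a group `H` with connection set `S` (assumed symmetric and not
containing the identity): `g` and `h` are adjacent iff `h * g⁻¹ ∈ S`. -/
def cayleyGraph {H : Type*} [Group H] (S : Set H) : SimpleGraph H :=
  SimpleGraph.fromRel (fun g h => h * g⁻¹ ∈ S)

/-- The tensor product of a simple graph with `K₂`, on vertex set `V × ZMod 2`. -/
def tensorK2 {V : Type*} (Γ : SimpleGraph V) : SimpleGraph (V × ZMod 2) where
  Adj p q := Γ.Adj p.1 q.1 ∧ p.2 ≠ q.2
  symm := by
    constructor
    intro p q h
    exact ⟨h.1.symm, h.2.symm⟩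
  loopless := by
    constructor
    intro p h
    exact h.2 rfl

/-- A graph `Γ` is stable if every automorphism of `Γ × K₂` is of the expected form
`(v,i) ↦ (σ v, i + ε)`. -/
def IsStable {V : Type*} (Γ : SimpleGraph V) : Prop :=
  ∀ φ : tensorK2 Γ ≃g tensorK2 Γ, ∃ σ : Γ ≃g Γ, ∃ ε : ZMod 2,
    ∀ p : V × ZMod 2, φ p = (σ p.1, p.2 + ε)

/- ## Auxiliary lemmas -/

private lemma zmod2_ne_iff {i j : ZMod 2} : i ≠ j ↔ j = i + 1 := by revert i j; decide

private lemma zmod2_self_ne_add_one (i : ZMod 2) : i ≠ i + 1 := by revert i; decide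

private lemma zmod2_cases (i : ZMod 2) : i = 0 ∨ i = 1 := by revert i; decide

section TensorAux

variable {V : Type*} {Γ : SimpleGraph V}

lemma tensor_adj (p q : V × ZMod 2) :
    (tensorK2 Γ).Adj p q ↔ Γ.Adj p.1 q.1 ∧ p.2 ≠ q.2 := Iff.rfl

lemma tensor_lift {g h : V} (w : Γ.Walk g h) (i : ZMod 2) :
    (tensorK2 Γ).Reachable (g, i) (h, i + (w.length : ZMod 2)) := by
  induction w generalizing i with
  | nil =>
    simp only [SimpleGraph.Walk.length_nil, Nat.cast_zero, add_zero]
    exact SimpleGraph.Reachable.refl _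
  | @cons u v w' hadj tail ih =>
    have hstep : (tensorK2 Γ).Adj (u, i) (v, i + 1) :=
      ⟨hadj, zmod2_self_ne_add_one i⟩
    have := (hstep.reachable).trans (ih (i + 1))
    have hlen : i + 1 + ((tail.length : ℕ) : ZMod 2)
        = i + (((SimpleGraph.Walk.cons hadj tail).length : ℕ) : ZMod 2) := by
      simp [SimpleGraph.Walk.length_cons]
      push_cast
      ring
    rwa [hlen] at this

lemma tensor_connected (hconn : Γ.Connected) (hnb : ¬ Γ.Colorable 2) :
    (tensorK2 Γ).Connected := by
  classical
  have hne : Nonempty V := hconn.nonempty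
  obtain ⟨v₀⟩ := hne
  set R : V × ZMod 2 → Prop := fun p => (tensorK2 Γ).Reachable (v₀, 0) p with hR
  have hex : ∀ g : V, ∃ i, R (g, i) := by
    intro g
    obtain ⟨w⟩ := hconn.preconnected v₀ g
    exact ⟨0 + (w.length : ZMod 2), tensor_lift w 0⟩
  by_cases hboth : ∃ g i, R (g, i) ∧ R (g, i + 1)
  · obtain ⟨g, i, h1, h2⟩ := hboth
    have hall : ∀ p, R p := by
      rintro ⟨x, j⟩
      obtain ⟨w⟩ := hconn.preconnected g x
      have r1 : R (x, i + (w.length : ZMod 2)) := h1.trans (tensor_lift w i)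
      have r2 : R (x, i + 1 + (w.length : ZMod 2)) := h2.trans (tensor_lift w (i + 1))
      rcases zmod2_cases (j - (i + (w.length : ZMod 2))) with hj | hj
      · have : j = i + (w.length : ZMod 2) := by
          have := sub_eq_zero.mp hj; exact this
        rwa [this]
      · have : j = i + 1 + (w.length : ZMod 2) := by
          have := sub_eq_iff_eq_add.mp hj; rw [this]; ring
        rwa [this]
    rw [SimpleGraph.connected_iff]
    exact ⟨fun p q => (hall p).symm.trans (hall q), ⟨(v₀, 0)⟩⟩
  · push_neg at hboth
    exfalso
    apply hnb
    set c : V → ZMod 2 := fun g => if R (g, 0) then 0 else 1 with hc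
    have hRc : ∀ g, R (g, c g) := by
      intro g
      by_cases h0 : R (g, 0)
      · simpa [hc, h0] using h0
      · obtain ⟨i, hi⟩ := hex g
        rcases zmod2_cases i with h | h
        · exact absurd (h ▸ hi) h0
        · simpa [hc, h0, ← h] using hi
    have hcol : ∀ {g h'}, Γ.Adj g h' → c g ≠ c h' := by
      intro g h' hadj heq
      have r1 : R (h', c h') := hRc h'
      have r2 : R (h', c g + 1) :=
        (hRc g).trans (SimpleGraph.Adj.reachable ⟨hadj, zmod2_self_ne_add_one _⟩)
      rw [heq] at r2
      exact hboth h' (c h') r1 r2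
    have C : Γ.Coloring (ZMod 2) := SimpleGraph.Coloring.mk c (fun hadj => hcol hadj)
    have := C.colorable
    rwa [ZMod.card] at this

end TensorAux

section CayleyAux

variable {H : Type*} [Group H] (S : Set H)

lemma cayley_adj_mul (a g h : H) :
    (cayleyGraph S).Adj (g * a) (h * a) ↔ (cayleyGraph S).Adj g h := by
  simp [cayleyGraph, SimpleGraph.fromRel_adj, mul_assoc, mul_inv_rev]

/-- Right translation as an automorphism of the Cayley graph. -/
def cayleyMul (a : H) : cayleyGraph S ≃g cayleyGraph S where
  toEquiv := Equiv.mulRight a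
  map_rel_iff' := by intro g h; exact cayley_adj_mul S a g h

@[simp] lemma cayleyMul_apply (a g : H) : cayleyMul S a g = g * a := rfl

/-- Right translation as an automorphism of the tensor product. -/
def tensorTrans (a : H) :
    tensorK2 (cayleyGraph S) ≃g tensorK2 (cayleyGraph S) where
  toEquiv := (Equiv.mulRight a).prodCongr (Equiv.refl _)
  map_rel_iff' := by
    intro p q
    show (tensorK2 (cayleyGraph S)).Adj (p.1 * a, p.2) (q.1 * a, q.2) ↔ _
    rw [tensor_adj, tensor_adj]
    exact and_congr_left' (cayley_adj_mul S a p.1 q.1)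

@[simp] lemma tensorTrans_apply (a : H) (p : H × ZMod 2) :
    tensorTrans S a p = (p.1 * a, p.2) := rfl

/-- Shifting the second coordinate as an automorphism of the tensor product. -/
def tensorAdd {V : Type*} (Γ : SimpleGraph V) (ε : ZMod 2) :
    tensorK2 Γ ≃g tensorK2 Γ where
  toEquiv := (Equiv.refl V).prodCongr (Equiv.addRight ε)
  map_rel_iff' := by
    intro p q
    show (tensorK2 Γ).Adj (p.1, p.2 + ε) (q.1, q.2 + ε) ↔ _
    rw [tensor_adj, tensor_adj]
    exact and_congr_right' (by simp)

@[simp] lemma tensorAdd_apply {V : Type*} (Γ : SimpleGraph V) (ε : ZMod 2) (p : V × ZMod 2) :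
    tensorAdd Γ ε p = (p.1, p.2 + ε) := rfl

end CayleyAux

/-- A connected non-bipartite Cayley graph `Γ = Cay(H,S)` is unstable iff the orbit of the
vertex `(e,1)` under the stabilizer of `(e,0)` in `Aut(Γ × K₂)` contains a vertex different
from `(e,1)`. -/
theorem unstable_iff_orbit_of_a_nontrivial
    (H : Type*) [Group H] [Fintype H]
    (S : Set H) (hSsymm : ∀ s, s ∈ S ↔ s⁻¹ ∈ S) (hS1 : (1 : H) ∉ S)
    (hconn : (cayleyGraph S).Connected) (hnbip : ¬ (cayleyGraph S).Colorable 2) :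
    ¬ IsStable (cayleyGraph S) ↔
      ∃ φ : tensorK2 (cayleyGraph S) ≃g tensorK2 (cayleyGraph S),
        φ (1, 0) = (1, 0) ∧ φ (1, 1) ≠ (1, 1) := by
  have htc : (tensorK2 (cayleyGraph S)).Connected := tensor_connected hconn hnbip
  constructor
  · -- unstable → nontrivial element of the stabilizer-orbit
    intro hun
    by_contra hno
    push_neg at hno
    -- hno : every automorphism fixing (1,0) also fixes (1,1)
    apply hun
    intro φ
    set a : H := (φ (1, 0)).1 with ha
    set ε : ZMod 2 := (φ (1, 0)).2 with hε
    set ψ : tensorK2 (cayleyGraph S) ≃g tensorK2 (cayleyGraph S) :=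
      φ.trans ((tensorTrans S a⁻¹).trans (tensorAdd _ (-ε))) with hψ
    have hψval : ∀ p, ψ p = ((φ p).1 * a⁻¹, (φ p).2 + (-ε)) := fun p => rfl
    have hψ0 : ψ (1, 0) = (1, 0) := by
      rw [hψval]
      simp [← ha, ← hε]
      rcases zmod2_cases ε with h | h <;> rw [h] <;> decide
    -- ψ preserves the second coordinate
    have hstep : ∀ p q, (tensorK2 (cayleyGraph S)).Adj p q →
        (ψ q).2 - q.2 = (ψ p).2 - p.2 := by
      intro p q hadj
      have h1 : (tensorK2 (cayleyGraph S)).Adj (ψ p) (ψ q) := ψ.map_rel_iff.mpr hadj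
      have e1 : (ψ q).2 = (ψ p).2 + 1 := zmod2_ne_iff.mp h1.2
      have e2 : q.2 = p.2 + 1 := zmod2_ne_iff.mp hadj.2
      rw [e1, e2]; ring
    have hwalk : ∀ {p q}, (tensorK2 (cayleyGraph S)).Walk p q →
        (ψ q).2 - q.2 = (ψ p).2 - p.2 := by
      intro p q w
      induction w with
      | nil => rfl
      | cons hadj tail ih => rw [ih, hstep _ _ hadj]
    have hpar : ∀ p, (ψ p).2 = p.2 := by
      intro p
      obtain ⟨w⟩ := htc.preconnected (1, 0) p
      have := hwalk w
      rw [hψ0] at this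
      simpa [sub_eq_zero] using this
    set σf : H → H := fun g => (ψ (g, 0)).1 with hσf
    -- ψ has the form (g, i) ↦ (σf g, i)
    have hform : ∀ (g : H) (i : ZMod 2), ψ (g, i) = (σf g, i) := by
      intro g i
      rcases zmod2_cases i with h | h
      · subst h
        exact Prod.ext rfl (hpar (g, 0))
      · subst h
        -- use the hypothesis on the conjugated automorphism
        set χ : tensorK2 (cayleyGraph S) ≃g tensorK2 (cayleyGraph S) :=
          (tensorTrans S g).trans (ψ.trans (tensorTrans S (σf g)⁻¹)) with hχ
        have hχval : ∀ p, χ p = ((ψ (p.1 * g, p.2)).1 * (σf g)⁻¹, (ψ (p.1 * g, p.2)).2) :=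
          fun p => rfl
        have hχ0 : χ (1, 0) = (1, 0) := by
          rw [hχval]
          simp [hpar (g, 0)]
          exact mul_inv_cancel (σf g)
        have hχ1 : χ (1, 1) = (1, 1) := hno χ hχ0
        rw [hχval] at hχ1
        simp only [one_mul] at hχ1
        have h1 : (ψ (g, 1)).1 * (σf g)⁻¹ = 1 := congrArg Prod.fst hχ1
        have h2 : (ψ (g, 1)).1 = σf g := by
          rwa [mul_inv_eq_one] at h1
        exact Prod.ext h2 (hpar (g, 1))
    -- build the automorphism σ of the Cayley graph
    have hleft : Function.LeftInverse (fun g => (ψ.symm (g, 0)).1) σf := by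
      intro g
      show (ψ.symm (σf g, 0)).1 = g
      rw [← hform g 0, ψ.symm_apply_apply]
    have hright : Function.RightInverse (fun g => (ψ.symm (g, 0)).1) σf := by
      intro g
      have hp : ψ (ψ.symm (g, 0)) = (g, 0) := ψ.apply_symm_apply _
      have := hform (ψ.symm (g, 0)).1 (ψ.symm (g, 0)).2
      rw [Prod.mk.eta] at this
      rw [this] at hp
      exact congrArg Prod.fst hp
    set σE : H ≃ H := ⟨σf, fun g => (ψ.symm (g, 0)).1, hleft, hright⟩ with hσE
    have hmapiff : ∀ g h' : H,
        (cayleyGraph S).Adj (σf g) (σf h') ↔ (cayleyGraph S).Adj g h' := by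
      intro g h'
      have key := ψ.map_rel_iff (a := (g, (0 : ZMod 2))) (b := (h', (1 : ZMod 2)))
      rw [hform g 0, hform h' 1] at key
      constructor
      · intro had
        exact (key.mp ⟨had, show (0 : ZMod 2) ≠ 1 by decide⟩).1
      · intro had
        exact (key.mpr ⟨had, show (0 : ZMod 2) ≠ 1 by decide⟩).1
    set σ : cayleyGraph S ≃g cayleyGraph S :=
      ⟨σE, by intro g h'; exact hmapiff g h'⟩ with hσ
    refine ⟨σ.trans (cayleyMul S a), ε, ?_⟩
    intro p
    have h1 : ψ p = (σf p.1, p.2) := by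
      rw [← Prod.mk.eta (p := p), hform p.1 p.2]
    rw [hψval] at h1
    have e1 : (φ p).1 * a⁻¹ = σf p.1 := congrArg Prod.fst h1
    have e2 : (φ p).2 + (-ε) = p.2 := congrArg Prod.snd h1
    have e1' : (φ p).1 = σf p.1 * a := by
      rwa [mul_inv_eq_iff_eq_mul] at e1
    have e2' : (φ p).2 = p.2 + ε := by
      rw [← e2]; ring
    exact Prod.ext e1' e2'
  · -- nontrivial element of the stabilizer-orbit → unstable
    rintro ⟨φ, h0, h1⟩ hstab
    obtain ⟨σ, ε, hφ⟩ := hstab φ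
    have e0 := hφ (1, 0)
    rw [h0] at e0
    have hε : (0 : ZMod 2) + ε = 0 := (congrArg Prod.snd e0).symm
    have hσ1 : σ 1 = (1 : H) := (congrArg Prod.fst e0).symm
    have hε0 : ε = 0 := by rwa [zero_add] at hε
    apply h1
    rw [hφ (1, 1), hσ1, hε0, add_zero]
end

section
/- Let m be a positive integer, S₁,…,S_k ⊆ ℤ/mℤ, and let l be a positive integer coprime to m. If (σ_i)_{i∈ℤ} is a chain automorphism of DiCay(ℤ/mℤ, S₁,…,S_k), then the family (σ_{l·i})_{i∈ℤ} is a chain automorphism of DiCay(ℤ/mℤ, l·S₁,…,l·S_k), where l·S_j = {l·s : s ∈ S_j}. -/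
open Finset MulAction

open scoped Classical

namespace ChainAux

variable {m : ℕ} [NeZero m]

/-- Number of `T`-walks of length `n` from `x` to `y`. -/
noncomputable def W (T : Set (ZMod m)) : ℕ → ZMod m → ZMod m → ℕ
  | 0, x, y => if x = y then 1 else 0
  | n+1, x, y => ∑ z : ZMod m, if z - x ∈ T then W T n z y else 0

/-- Number of `n`-tuples of steps in `T` summing to `d`. -/
noncomputable def N (T : Set (ZMod m)) (n : ℕ) (d : ZMod m) : ℕ :=
  Fintype.card {c : Fin n → ZMod m // (∀ t, c t ∈ T) ∧ ∑ t, c t = d}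

lemma W_invariant (T : Set (ZMod m)) (σ : ℤ → Equiv.Perm (ZMod m))
    (hσ : ∀ (i : ℤ) (x y : ZMod m), y - x ∈ T ↔ σ (i + 1) y - σ i x ∈ T) :
    ∀ (n : ℕ) (a : ℤ) (x y : ZMod m),
      W T n x y = W T n (σ a x) (σ (a + n) y) := by
  intro n
  induction n with
  | zero =>
      intro a x y
      have h : (a + ((0:ℕ):ℤ)) = a := by push_cast; ring
      rw [h, W, W]
      exact if_congr (Equiv.apply_eq_iff_eq (σ a)).symm rfl rfl
  | succ n IH =>
      intro a x y
      calc W T (n+1) x y = ∑ z : ZMod m, if z - x ∈ T then W T n z y else 0 := by rw [W]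
        _ = ∑ z : ZMod m, if σ (a+1) z - σ a x ∈ T then
              W T n (σ (a+1) z) (σ (a+1+n) y) else 0 := by
            refine Finset.sum_congr rfl fun z _ => ?_
            exact if_congr (hσ a x z) (IH (a+1) z y) rfl
        _ = ∑ z : ZMod m, if z - σ a x ∈ T then W T n z (σ (a+1+n) y) else 0 :=
            Equiv.sum_comp (σ (a+1))
              (fun z => if z - σ a x ∈ T then W T n z (σ (a+1+n) y) else 0)
        _ = W T (n+1) (σ a x) (σ (a + (n+1:ℕ)) y) := by
            have h : (a + ((n+1:ℕ):ℤ)) = a + 1 + n := by push_cast; ring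
            rw [h, W]

lemma N_zero (T : Set (ZMod m)) (d : ZMod m) :
    N T 0 d = if d = 0 then 1 else 0 := by
  classical
  rw [N]
  have h : ∀ c : Fin 0 → ZMod m, ((∀ t, c t ∈ T) ∧ ∑ t, c t = d) ↔ ((0:ZMod m) = d) := by
    intro c; simp
  rw [Fintype.card_congr (Equiv.subtypeEquivRight h)]
  by_cases hd : d = 0
  · subst hd
    rw [Fintype.card_congr (Equiv.subtypeUnivEquiv (fun _ => rfl))]
    simp
  · rw [if_neg hd]
    exact Fintype.card_eq_zero_iff.mpr ⟨fun c => hd (c.2.symm)⟩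

lemma N_succ (T : Set (ZMod m)) (n : ℕ) (d : ZMod m) :
    N T (n+1) d = ∑ z : ZMod m, if z ∈ T then N T n (d - z) else 0 := by
  classical
  rw [N]
  have e1 : {c : Fin (n+1) → ZMod m // (∀ t, c t ∈ T) ∧ ∑ t, c t = d} ≃
      Σ z : ZMod m, {c : Fin n → ZMod m // (z ∈ T ∧ ∀ t, c t ∈ T) ∧ z + ∑ t, c t = d} :=
    { toFun := fun c => ⟨c.1 0, ⟨Fin.tail c.1,
        ⟨⟨c.2.1 0, fun t => c.2.1 t.succ⟩, by
          have := c.2.2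
          rw [Fin.sum_univ_succ] at this
          exact this⟩⟩⟩
      invFun := fun zc => ⟨Fin.cons zc.1 zc.2.1,
        ⟨fun t => by
          refine Fin.cases ?_ ?_ t
          · rw [Fin.cons_zero]; exact zc.2.2.1.1
          · intro i; rw [Fin.cons_succ]; exact zc.2.2.1.2 i,
         by
          rw [Fin.sum_univ_succ]
          simp only [Fin.cons_zero, Fin.cons_succ]
          exact zc.2.2.2⟩⟩
      left_inv := fun c => Subtype.ext (Fin.cons_self_tail c.1)
      right_inv := fun zc => by
        refine Sigma.ext ?_ ?_
        · simp
        · refine heq_of_eq (Subtype.ext ?_)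
          simp [Fin.tail_cons] }
  rw [Fintype.card_congr e1, Fintype.card_sigma]
  refine Finset.sum_congr rfl fun z _ => ?_
  by_cases hz : z ∈ T
  · rw [if_pos hz, N]
    refine Fintype.card_congr (Equiv.subtypeEquivRight fun c => ?_)
    constructor
    · rintro ⟨⟨-, h1⟩, h2⟩
      exact ⟨h1, by rw [eq_sub_iff_add_eq, add_comm]; exact h2⟩
    · rintro ⟨h1, h2⟩
      exact ⟨⟨hz, h1⟩, by rw [add_comm]; exact eq_sub_iff_add_eq.mp h2⟩
  · rw [if_neg hz]
    exact Fintype.card_eq_zero_iff.mpr ⟨fun c => hz c.2.1.1⟩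

lemma W_eq_N (T : Set (ZMod m)) :
    ∀ (n : ℕ) (x y : ZMod m), W T n x y = N T n (y - x) := by
  intro n
  induction n with
  | zero =>
      intro x y
      rw [W, N_zero]
      exact if_congr (by constructor <;> intro h <;> [simp [h]; exact (sub_eq_zero.mp h).symm])
        rfl rfl
  | succ n IH =>
      intro x y
      rw [W, N_succ]
      have := Equiv.sum_comp (Equiv.subRight x)
        (fun z => if z ∈ T then N T n (y - x - z) else 0)
      rw [← this]
      refine Finset.sum_congr rfl fun z _ => ?_
      simp only [Equiv.subRight_apply]
      rw [IH z y]
      have h : y - x - (z - x) = y - z := by ring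
      rw [h]

lemma N_modEq (T : Set (ZMod m)) (p : ℕ) (hp : p.Prime) (hpm : p.Coprime m) (d : ZMod m) :
    N T p d ≡ (if d ∈ (fun s => (p : ZMod m) * s) '' T then 1 else 0) [MOD p] := by
  classical
  haveI : Fact p.Prime := ⟨hp⟩
  haveI : NeZero p := ⟨hp.pos.ne'⟩
  set X := {c : ZMod p → ZMod m // (∀ t, c t ∈ T) ∧ ∑ t, c t = d} with hX
  have e0 : ZMod p ≃ Fin p := Fintype.equivFinOfCardEq (ZMod.card p)
  have hNX : N T p d = Nat.card X := by
    rw [N, ← Nat.card_eq_fintype_card]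
    refine Nat.card_congr ?_
    exact
      { toFun := fun c => ⟨fun t => c.1 (e0 t),
          ⟨fun t => c.2.1 (e0 t), by
            rw [Equiv.sum_comp e0 c.1]; exact c.2.2⟩⟩
        invFun := fun c => ⟨fun t => c.1 (e0.symm t),
          ⟨fun t => c.2.1 (e0.symm t), by
            rw [Equiv.sum_comp e0.symm c.1]; exact c.2.2⟩⟩
        left_inv := fun c => Subtype.ext (funext fun t => by simp)
        right_inv := fun c => Subtype.ext (funext fun t => by simp) }
  -- rotation action of `Multiplicative (ZMod p)` on `X`
  letI : SMul (Multiplicative (ZMod p)) X :=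
    ⟨fun g c => ⟨fun t => c.1 (t + g.toAdd),
      ⟨fun t => c.2.1 _, by
        rw [Fintype.sum_equiv (Equiv.addRight g.toAdd) (fun t => c.1 (t + g.toAdd)) c.1
          (fun t => rfl)]
        exact c.2.2⟩⟩⟩
  letI : MulAction (Multiplicative (ZMod p)) X :=
    { one_smul := fun c => Subtype.ext (funext fun t => by
        show c.1 (t + (1 : Multiplicative (ZMod p)).toAdd) = c.1 t
        simp
        )
      mul_smul := fun g h c => Subtype.ext (funext fun t => by
        show c.1 (t + (g * h).toAdd) = c.1 (t + g.toAdd + h.toAdd)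
        rw [toAdd_mul]
        ring_nf) }
  have hPG : IsPGroup p (Multiplicative (ZMod p)) := by
    refine IsPGroup.of_card (n := 1) ?_
    rw [Nat.card_eq_fintype_card]
    simp [ZMod.card]
  have hmod := hPG.card_modEq_card_fixedPoints X
  have hfix : Nat.card (fixedPoints (Multiplicative (ZMod p)) X)
      = (if d ∈ (fun s => (p : ZMod m) * s) '' T then 1 else 0) := by
    have hconstsum : ∀ z : ZMod m, (∑ _t : ZMod p, z) = (p : ZMod m) * z := by
      intro z
      rw [Finset.sum_const, Finset.card_univ, ZMod.card, nsmul_eq_mul]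
    have efix : fixedPoints (Multiplicative (ZMod p)) X ≃
        {z : ZMod m // z ∈ T ∧ (p : ZMod m) * z = d} :=
      { toFun := fun cc => by
          have hconst : ∀ t : ZMod p, cc.1.1 t = cc.1.1 0 := by
            intro t
            have h := (MulAction.mem_fixedPoints.mp cc.2) (Multiplicative.ofAdd t)
            have h0 : cc.1.1 (0 + t) = cc.1.1 0 :=
              congrArg (fun f => f.1 (0 : ZMod p)) h
            rw [zero_add] at h0
            exact h0
          refine ⟨cc.1.1 0, cc.1.2.1 0, ?_⟩
          have hs := cc.1.2.2
          rw [Finset.sum_congr rfl (fun t _ => hconst t)] at hs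
          rw [← hconstsum (cc.1.1 0)]
          exact hs
        invFun := fun zz => ⟨⟨fun _ => zz.1, ⟨fun _ => zz.2.1, by
            rw [hconstsum]; exact zz.2.2⟩⟩,
          MulAction.mem_fixedPoints.mpr fun g => Subtype.ext (funext fun t => rfl)⟩
        left_inv := fun cc => by
          have hconst : ∀ t : ZMod p, cc.1.1 t = cc.1.1 0 := by
            intro t
            have h := (MulAction.mem_fixedPoints.mp cc.2) (Multiplicative.ofAdd t)
            have h0 : cc.1.1 (0 + t) = cc.1.1 0 :=
              congrArg (fun f => f.1 (0 : ZMod p)) h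
            rw [zero_add] at h0
            exact h0
          exact Subtype.ext (Subtype.ext (funext fun t => (hconst t).symm))
        right_inv := fun zz => rfl }
    rw [Nat.card_congr efix]
    by_cases hd : d ∈ (fun s => (p : ZMod m) * s) '' T
    · rw [if_pos hd]
      obtain ⟨s, hs, hps⟩ := hd
      have hu : IsUnit ((p : ℕ) : ZMod m) := (ZMod.isUnit_iff_coprime p m).mpr hpm
      rw [Nat.card_eq_one_iff_unique]
      constructor
      · refine ⟨fun z w => Subtype.ext ?_⟩
        have hz := z.2.2
        have hw := w.2.2
        exact hu.mul_left_cancel (by rw [hz, hw])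
      · exact ⟨⟨s, hs, hps⟩⟩
    · rw [if_neg hd]
      haveI : IsEmpty {z : ZMod m // z ∈ T ∧ (p : ZMod m) * z = d} :=
        ⟨fun z => hd ⟨z.1, z.2.1, z.2.2⟩⟩
      exact Nat.card_of_isEmpty
  rw [hNX, ← hfix]
  exact hmod

lemma pair_lemma (T : Set (ZMod m)) (σ : ℤ → Equiv.Perm (ZMod m))
    (hσ : ∀ (i : ℤ) (x y : ZMod m), y - x ∈ T ↔ σ (i + 1) y - σ i x ∈ T)
    (p : ℕ) (hp : p.Prime) (hpm : p.Coprime m) (a : ℤ) (x y : ZMod m) :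
    y - x ∈ (fun s => (p : ZMod m) * s) '' T ↔
      σ (a + p) y - σ a x ∈ (fun s => (p : ZMod m) * s) '' T := by
  have h1 : N T p (y - x) = N T p (σ (a + p) y - σ a x) := by
    rw [← W_eq_N, ← W_eq_N]
    exact W_invariant T σ hσ p a x y
  have h2 := N_modEq T p hp hpm (y - x)
  have h3 := N_modEq T p hp hpm (σ (a + p) y - σ a x)
  have key : (if y - x ∈ (fun s => (p : ZMod m) * s) '' T then 1 else 0) ≡
      (if σ (a + p) y - σ a x ∈ (fun s => (p : ZMod m) * s) '' T then 1 else 0) [MOD p] :=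
    h2.symm.trans (by rw [h1]; exact h3)
  have hp2 := hp.two_le
  have h4 : 1 % p = 1 := Nat.mod_eq_of_lt (by omega)
  have h5 : 0 % p = 0 := Nat.zero_mod p
  constructor
  · intro hmem
    by_contra hno
    rw [if_pos hmem, if_neg hno] at key
    have h6 : 1 % p = 0 % p := key
    omega
  · intro hmem
    by_contra hno
    rw [if_neg hno, if_pos hmem] at key
    have h6 : 0 % p = 1 % p := key
    omega

end ChainAux

/-- A chain automorphism of the colored directed circulant `DiCay(ℤ/mℤ, S₁, …, S_k)`:
a family `(σ_i)_{i ∈ ℤ}` of permutations such that for every level `i`, every color `j`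
and all vertices `x, y`: `y − x ∈ S_j ↔ σ_{i+1}(y) − σ_i(x) ∈ S_j`. -/
def IsChainAuto {m k : ℕ} (S : Fin k → Set (ZMod m)) (σ : ℤ → Equiv.Perm (ZMod m)) : Prop :=
  ∀ (i : ℤ) (j : Fin k) (x y : ZMod m), y - x ∈ S j ↔ σ (i + 1) y - σ i x ∈ S j

namespace ChainAux

lemma primeStep {m k : ℕ} [NeZero m] (S : Fin k → Set (ZMod m))
    (σ : ℤ → Equiv.Perm (ZMod m)) (hσ : IsChainAuto S σ)
    (p : ℕ) (hp : p.Prime) (hpm : p.Coprime m) :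
    IsChainAuto (fun j => (fun s => (p : ZMod m) * s) '' S j) (fun i => σ ((p:ℤ) * i)) := by
  intro i j x y
  have h := pair_lemma (S j) σ (fun i x y => hσ i j x y) p hp hpm ((p:ℤ) * i) x y
  have hidx : (p:ℤ) * (i + 1) = (p:ℤ) * i + p := by ring
  simpa [hidx] using h

lemma aux {m : ℕ} [NeZero m] :
    ∀ (l : ℕ), 0 < l → Nat.Coprime l m → ∀ {k : ℕ} (S : Fin k → Set (ZMod m))
      (σ : ℤ → Equiv.Perm (ZMod m)), IsChainAuto S σ →
      IsChainAuto (fun j => (fun s => (l : ZMod m) * s) '' S j) (fun i => σ ((l : ℤ) * i)) := by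
  intro l
  induction l using Nat.strong_induction_on with
  | _ l IH =>
    intro hl hcop k S σ hσ
    by_cases h1 : l = 1
    · subst h1
      intro i j x y
      have h := hσ i j x y
      simpa using h
    · have hp : l.minFac.Prime := Nat.minFac_prime h1
      set p := l.minFac with hpdef
      set q := l / p with hqdef
      have hpl : p ∣ l := Nat.minFac_dvd l
      have hlq : l = p * q := (Nat.mul_div_cancel' hpl).symm
      have hq0 : 0 < q := Nat.div_pos (Nat.minFac_le hl) hp.pos
      have hql : q < l := Nat.div_lt_self hl hp.one_lt
      have hqdvd : q ∣ l := ⟨p, by rw [hlq]; ring⟩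
      have hqc : Nat.Coprime q m := Nat.Coprime.coprime_dvd_left hqdvd hcop
      have hpc : Nat.Coprime p m := Nat.Coprime.coprime_dvd_left hpl hcop
      have step1 := primeStep S σ hσ p hp hpc
      have step2 := IH q hql hq0 hqc _ _ step1
      intro i j x y
      have h := step2 i j x y
      have himg : (fun s => (q : ZMod m) * s) '' ((fun s => (p : ZMod m) * s) '' S j)
          = (fun s => (l : ZMod m) * s) '' S j := by
        rw [← Set.image_comp]
        refine Set.image_congr fun s _ => ?_
        show (q : ZMod m) * ((p : ZMod m) * s) = (l : ZMod m) * s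
        rw [hlq]; push_cast; ring
      have hidx1 : (p:ℤ) * ((q:ℤ) * i) = (l:ℤ) * i := by rw [hlq]; push_cast; ring
      have hidx2 : (p:ℤ) * ((q:ℤ) * (i+1)) = (l:ℤ) * (i+1) := by rw [hlq]; push_cast; ring
      simp only [himg, hidx1, hidx2] at h
      exact h

end ChainAux

/-- If `(σ_i)` is a chain automorphism of `DiCay(ℤ/mℤ, S₁, …, S_k)` and `l` is a positive
integer coprime to `m`, then `(σ_{l·i})` is a chain automorphism of
`DiCay(ℤ/mℤ, l·S₁, …, l·S_k)`. -/
theorem chainAuto_mul_index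
    (m k : ℕ) (hm : 0 < m) (S : Fin k → Set (ZMod m))
    (l : ℕ) (hl : 0 < l) (hcop : Nat.Coprime l m)
    (σ : ℤ → Equiv.Perm (ZMod m)) (hσ : IsChainAuto S σ) :
    IsChainAuto (fun j => (fun s => (l : ZMod m) * s) '' S j)
      (fun i => σ ((l : ℤ) * i)) := by
  haveI : NeZero m := ⟨hm.ne'⟩
  exact ChainAux.aux l hl hcop S σ hσ
end

section
/- Let m be an odd positive integer and let S ⊆ ℤ/mℤ satisfy S = −S and 0 ∉ S. If the circulant Γ = Cay(ℤ/mℤ, S) is connected and reduced, then Γ is stable: every automorphism of Γ × K₂ has the form (v,i) ↦ (σ(v), i+ε) for some automorphism σ of Γ and some ε ∈ ℤ/2ℤ. Equivalently, every two-fold automorphism (σ₁, σ₂) of Γ satisfies σ₁ = σ₂. -/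
open SimpleGraph

namespace TwoFoldAux
open Finset


variable {m : ℕ} [NeZero m]

/-- circulant 0/1 matrix over `ZMod 2` attached to a function. -/
def circM (g : ZMod m → ZMod 2) : Matrix (ZMod m) (ZMod m) (ZMod 2) :=
  Matrix.of fun v w => g (w - v)

/-- permutation matrix over `ZMod 2`. -/
def permM (σ : Equiv.Perm (ZMod m)) : Matrix (ZMod m) (ZMod m) (ZMod 2) :=
  Matrix.of fun v w => if v = σ w then 1 else 0

lemma permM_mul (σ : Equiv.Perm (ZMod m)) (M : Matrix (ZMod m) (ZMod m) (ZMod 2))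
    (v w : ZMod m) : (permM σ * M) v w = M (σ.symm v) w := by
  rw [Matrix.mul_apply]
  have key : ∀ x : ZMod m, permM σ v x * M x w = if x = σ.symm v then M x w else 0 := by
    intro x
    by_cases hx : x = σ.symm v
    · subst hx
      simp [permM]
    · have : ¬ (v = σ x) := fun hv => hx (by rw [hv, Equiv.symm_apply_apply])
      simp [permM, hx, this]
  rw [Finset.sum_congr rfl (fun x _ => key x), Finset.sum_ite_eq' univ,
    if_pos (Finset.mem_univ _)]

lemma mul_permM (σ : Equiv.Perm (ZMod m)) (M : Matrix (ZMod m) (ZMod m) (ZMod 2))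
    (v w : ZMod m) : (M * permM σ) v w = M v (σ w) := by
  rw [Matrix.mul_apply]
  have key : ∀ x : ZMod m, M v x * permM σ x w = if x = σ w then M v x else 0 := by
    intro x
    by_cases hx : x = σ w
    · subst hx; simp [permM]
    · simp [permM, hx]
  rw [Finset.sum_congr rfl (fun x _ => key x), Finset.sum_ite_eq' univ,
    if_pos (Finset.mem_univ _)]

lemma circM_mul_self (hinv : ZMod m) (h2 : 2 * hinv = 1) (g : ZMod m → ZMod 2) :
    circM g * circM g = circM fun x => g (hinv * x) := by
  have idsq : ∀ z : ZMod 2, z * z = z := by decide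
  ext v w
  rw [Matrix.mul_apply]
  show (∑ x, g (x - v) * g (w - x)) = g (hinv * (w - v))
  set x₀ : ZMod m := hinv * (v + w) with hx₀
  have hx0sum : x₀ + x₀ = v + w := by
    rw [hx₀]; linear_combination (v + w) * h2
  have hsplit := Finset.sum_erase_add univ
    (fun x => g (x - v) * g (w - x)) (Finset.mem_univ x₀)
  rw [← hsplit]
  have hzero : ∑ x ∈ univ.erase x₀, g (x - v) * g (w - x) = 0 := by
    apply Finset.sum_involution (fun x _ => v + w - x)
    · intro x hx
      have e1 : v + w - x - v = w - x := by ring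
      have e2 : w - (v + w - x) = x - v := by ring
      rw [e1, e2, mul_comm]
      exact CharTwo.add_self_eq_zero _
    · intro x hx _ hfix
      have hxx : x + x = v + w := by linear_combination -hfix
      have : x = x₀ := by
        rw [hx₀]; linear_combination (-x) * h2 + hinv * hxx
      exact (Finset.mem_erase.mp hx).1 this
    · intro x hx
      rw [Finset.mem_erase]
      refine ⟨?_, Finset.mem_univ _⟩
      intro hbad
      have : x = x₀ := by linear_combination -hbad - hx0sum
      exact (Finset.mem_erase.mp hx).1 this
    · intro x hx
      ring
  rw [hzero, zero_add]
  have e1 : x₀ - v = hinv * (w - v) := by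
    rw [hx₀]; linear_combination v * h2
  have e2 : w - x₀ = hinv * (w - v) := by
    rw [hx₀]; linear_combination -w * h2
  show g (x₀ - v) * g (w - x₀) = g (hinv * (w - v))
  rw [e1, e2, idsq]

lemma circM_pow (hinv : ZMod m) (h2 : 2 * hinv = 1) (g : ZMod m → ZMod 2) (t : ℕ) :
    circM g ^ 2 ^ t = circM fun x => g (hinv ^ t * x) := by
  induction t with
  | zero =>
      rw [pow_zero, pow_one]
      refine congrArg circM (funext fun x => ?_)
      show g x = g (hinv ^ 0 * x)
      rw [pow_zero, one_mul]
  | succ t ih =>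
      have h21 : (2 : ℕ) ^ (t + 1) = 2 ^ t * 2 := by ring
      calc circM g ^ 2 ^ (t + 1) = (circM g ^ 2 ^ t) * (circM g ^ 2 ^ t) := by
            rw [h21, pow_mul, pow_two]
      _ = (circM fun x => g (hinv ^ t * x)) * (circM fun x => g (hinv ^ t * x)) := by rw [ih]
      _ = circM fun x => g (hinv ^ t * (hinv * x)) := circM_mul_self hinv h2 _
      _ = circM fun x => g (hinv ^ (t + 1) * x) := by
            refine congrArg circM (funext fun x => ?_)
            show g (hinv ^ t * (hinv * x)) = g (hinv ^ (t + 1) * x)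
            rw [← mul_assoc, ← pow_succ]



lemma zmod2_succ_of_ne {a b : ZMod 2} (h : a ≠ b) : b = a + 1 := by
  revert h; revert a b; decide

lemma zmod2_ne_succ (a : ZMod 2) : a ≠ a + 1 := by revert a; decide

lemma tensor_walk_parity {V : Type*} {Γ : SimpleGraph V} {p q : V × ZMod 2}
    (w : (tensorK2 Γ).Walk p q) : q.2 = p.2 + (w.length : ZMod 2) := by
  induction w with
  | nil => simp
  | @cons a b c h w ih =>
      rw [ih, zmod2_succ_of_ne h.2, SimpleGraph.Walk.length_cons]
      push_cast
      ring

lemma tensor_reachable_of_walk {V : Type*} {Γ : SimpleGraph V} {v w : V}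
    (p : Γ.Walk v w) (i : ZMod 2) :
    (tensorK2 Γ).Reachable (v, i) (w, i + (p.length : ZMod 2)) := by
  induction p generalizing i with
  | nil => simpa using Reachable.refl _
  | @cons a b c h p ih =>
      have hstep : (tensorK2 Γ).Adj (a, i) (b, i + 1) :=
        ⟨h, zmod2_ne_succ i⟩
      have := (hstep.reachable).trans (ih (i + 1))
      have hlen : (i + 1) + ((p.length : ℕ) : ZMod 2)
          = i + (((SimpleGraph.Walk.cons h p).length : ℕ) : ZMod 2) := by
        rw [SimpleGraph.Walk.length_cons]
        push_cast
        ring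
      rwa [hlen] at this

lemma circulant_adj_add {m : ℕ} {S : Set (ZMod m)} (hS0 : (0 : ZMod m) ∉ S)
    {s₀ : ZMod m} (hs₀ : s₀ ∈ S) (v : ZMod m) :
    (circulantGraph S).Adj v (v + s₀) := by
  rw [circulantGraph_adj]
  constructor
  · intro heq
    have : s₀ = 0 := by
      have := left_eq_add.mp heq
      exact this
    rw [this] at hs₀
    exact hS0 hs₀
  · right
    simpa using hs₀

lemma tensor_cycle {m : ℕ} {S : Set (ZMod m)} (hS0 : (0 : ZMod m) ∉ S)
    {s₀ : ZMod m} (hs₀ : s₀ ∈ S) (v : ZMod m) (i : ZMod 2) (n : ℕ) :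
    (tensorK2 (circulantGraph S)).Reachable (v, i)
      (v + (n : ZMod m) * s₀, i + (n : ZMod 2)) := by
  induction n with
  | zero => simpa using Reachable.refl _
  | succ n ih =>
      have hstep : (tensorK2 (circulantGraph S)).Adj
          (v + (n : ZMod m) * s₀, i + (n : ZMod 2))
          (v + ((n + 1 : ℕ) : ZMod m) * s₀, i + ((n + 1 : ℕ) : ZMod 2)) := by
        constructor
        · have := circulant_adj_add hS0 hs₀ (v + (n : ZMod m) * s₀)
          have harg : v + (n : ZMod m) * s₀ + s₀ = v + ((n + 1 : ℕ) : ZMod m) * s₀ := by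
            push_cast
            ring
          rwa [harg] at this
        · have : i + ((n + 1 : ℕ) : ZMod 2) = (i + (n : ZMod 2)) + 1 := by
            push_cast
            ring
          rw [this]
          exact zmod2_ne_succ _
      exact ih.trans hstep.reachable

lemma tensor_connected {m : ℕ} [NeZero m] (hodd : Odd m) {S : Set (ZMod m)}
    (hS0 : (0 : ZMod m) ∉ S) (hconn : (circulantGraph S).Connected)
    {s₀ : ZMod m} (hs₀ : s₀ ∈ S) :
    (tensorK2 (circulantGraph S)).Connected := by
  have hm2 : ((m : ℕ) : ZMod 2) = 1 := by
    rw [← ZMod.natCast_mod, Nat.odd_iff.mp hodd, Nat.cast_one]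
  constructor
  · rintro ⟨v, i⟩ ⟨w, j⟩
    obtain ⟨p⟩ := hconn.preconnected v w
    have r1 := tensor_reachable_of_walk (Γ := circulantGraph S) p i
    by_cases hij : i + (p.length : ZMod 2) = j
    · rwa [hij] at r1
    · have r2 := tensor_cycle hS0 hs₀ w (i + (p.length : ZMod 2)) m
      rw [ZMod.natCast_self, zero_mul, add_zero, hm2] at r2
      have := r1.trans r2
      rwa [← zmod2_succ_of_ne hij] at this

open scoped Classical in
lemma twofold_core (m : ℕ) (hpos : 0 < m) (hodd : Odd m) (S : Set (ZMod m))
    (hred : ∀ v w : ZMod m,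
      (circulantGraph S).neighborSet v = (circulantGraph S).neighborSet w → v = w)
    (σ₁ σ₂ : Equiv.Perm (ZMod m)) (h : IsTwoFoldAuto (circulantGraph S) σ₁ σ₂) :
    σ₁ = σ₂ := by
  haveI : NeZero m := ⟨hpos.ne'⟩
  -- 2 is invertible mod m
  have hcop : Nat.Coprime 2 m := by
    rw [Nat.prime_two.coprime_iff_not_dvd]
    obtain ⟨k, hk⟩ := hodd
    omega
  have hu2 : IsUnit (2 : ZMod m) := by
    have := (ZMod.isUnit_iff_coprime 2 m).mpr hcop
    simpa using this
  obtain ⟨u, hu⟩ := hu2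
  have h2 : 2 * ((u⁻¹ : (ZMod m)ˣ) : ZMod m) = 1 := by
    rw [← hu, ← Units.val_mul, mul_inv_cancel, Units.val_one]
  set hinv : ZMod m := ((u⁻¹ : (ZMod m)ˣ) : ZMod m) with hhinv
  set f : ZMod m → ZMod 2 :=
    fun x => if (circulantGraph S).Adj 0 x then 1 else 0 with hf
  have hAent : ∀ v w, (circM f) v w = if (circulantGraph S).Adj v w then 1 else 0 := by
    intro v w
    have hiff : (circulantGraph S).Adj 0 (w - v) ↔ (circulantGraph S).Adj v w := by
      have := circulantGraph_adj_translate (s := S) (u := 0) (v := w - v) (d := v)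
      rw [← this]
      simp
    show f (w - v) = _
    rw [hf]
    exact if_congr hiff rfl rfl
  -- fundamental identities
  have hid1 : permM σ₁ * circM f = circM f * permM σ₂ := by
    ext v w
    rw [permM_mul, mul_permM, hAent, hAent]
    refine if_congr ?_ rfl rfl
    have := h (σ₁.symm v) w
    rwa [Equiv.apply_symm_apply] at this
  have hid2 : permM σ₂ * circM f = circM f * permM σ₁ := by
    ext v w
    rw [permM_mul, mul_permM, hAent, hAent]
    refine if_congr ?_ rfl rfl
    have h1 := h w (σ₂.symm v)
    rw [Equiv.apply_symm_apply] at h1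
    rw [(circulantGraph S).adj_comm (σ₂.symm v) w, h1, (circulantGraph S).adj_comm]
  set t : ℕ := orderOf u with ht
  have htpos : 0 < t := orderOf_pos u
  have hinvt : hinv ^ t = 1 := by
    rw [hhinv, ← Units.val_pow_eq_pow_val, inv_pow, pow_orderOf_eq_one, inv_one, Units.val_one]
  have hAt : circM f ^ (2 ^ t) = circM f := by
    rw [circM_pow hinv h2 f t]
    refine congrArg circM (funext fun x => ?_)
    rw [hinvt, one_mul]
  -- commutation
  have hcomm2 : Commute (permM σ₁) (circM f * circM f) := by
    unfold Commute SemiconjBy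
    calc permM σ₁ * (circM f * circM f) = (permM σ₁ * circM f) * circM f := by rw [mul_assoc]
    _ = (circM f * permM σ₂) * circM f := by rw [hid1]
    _ = circM f * (permM σ₂ * circM f) := by rw [mul_assoc]
    _ = circM f * (circM f * permM σ₁) := by rw [hid2]
    _ = (circM f * circM f) * permM σ₁ := by rw [mul_assoc]
  obtain ⟨t', ht'⟩ : ∃ t', t = t' + 1 := ⟨t - 1, by omega⟩
  have hAA : (circM f * circM f) ^ (2 ^ t') = circM f ^ (2 ^ t) := by
    rw [← pow_two, ← pow_mul, ht']
    congr 1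
    rw [pow_succ]
    ring
  have hfinal : circM f * permM σ₁ = circM f * permM σ₂ := by
    calc circM f * permM σ₁ = circM f ^ (2 ^ t) * permM σ₁ := by rw [hAt]
    _ = (circM f * circM f) ^ (2 ^ t') * permM σ₁ := by rw [hAA]
    _ = permM σ₁ * (circM f * circM f) ^ (2 ^ t') := ((hcomm2.pow_right (2 ^ t')).eq).symm
    _ = permM σ₁ * circM f ^ (2 ^ t) := by rw [hAA]
    _ = permM σ₁ * circM f := by rw [hAt]
    _ = circM f * permM σ₂ := hid1
  -- extract neighborhood equality
  have hadj : ∀ v w, (circulantGraph S).Adj v (σ₁ w) ↔ (circulantGraph S).Adj v (σ₂ w) := by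
    intro v w
    have hent := congrFun (congrFun hfinal v) w
    rw [mul_permM, mul_permM, hAent, hAent] at hent
    by_cases h1 : (circulantGraph S).Adj v (σ₁ w) <;>
      by_cases h2' : (circulantGraph S).Adj v (σ₂ w)
    · exact iff_of_true h1 h2'
    · rw [if_pos h1, if_neg h2'] at hent
      exact absurd hent one_ne_zero
    · rw [if_neg h1, if_pos h2'] at hent
      exact absurd hent.symm one_ne_zero
    · exact iff_of_false h1 h2'
  refine Equiv.ext fun w => hred _ _ ?_
  ext x
  simp only [mem_neighborSet]
  rw [(circulantGraph S).adj_comm (σ₁ w) x, (circulantGraph S).adj_comm (σ₂ w) x]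
  exact hadj x w

end TwoFoldAux

/-- A connected reduced circulant of odd order is stable: every automorphism of `Γ × K₂`
has the expected form, equivalently every two-fold automorphism has equal coordinates. -/
theorem circulant_odd_order_stable
    (m : ℕ) (hpos : 0 < m) (hodd : Odd m)
    (S : Set (ZMod m)) (hSsymm : ∀ s, s ∈ S ↔ -s ∈ S) (hS0 : (0 : ZMod m) ∉ S)
    (hconn : (circulantGraph S).Connected)
    (hred : ∀ v w : ZMod m,
      (circulantGraph S).neighborSet v = (circulantGraph S).neighborSet w → v = w) :
    (∀ φ : tensorK2 (circulantGraph S) ≃g tensorK2 (circulantGraph S),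
      ∃ σ : circulantGraph S ≃g circulantGraph S, ∃ ε : ZMod 2,
        ∀ p : ZMod m × ZMod 2, φ p = (σ p.1, p.2 + ε)) ∧
    (∀ σ₁ σ₂ : Equiv.Perm (ZMod m), IsTwoFoldAuto (circulantGraph S) σ₁ σ₂ → σ₁ = σ₂) := by
  haveI : NeZero m := ⟨hpos.ne'⟩
  have core : ∀ σ₁ σ₂ : Equiv.Perm (ZMod m),
      IsTwoFoldAuto (circulantGraph S) σ₁ σ₂ → σ₁ = σ₂ :=
    fun σ₁ σ₂ h => TwoFoldAux.twofold_core m hpos hodd S hred σ₁ σ₂ h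
  refine ⟨?_, core⟩
  intro φ
  have hz2cases : ∀ a : ZMod 2, a = 0 ∨ a = 1 := by decide
  by_cases hm1 : m = 1
  · -- trivial one-vertex graph
    subst hm1
    have huniq : ∀ a b : ZMod 1, a = b := fun a b => Subsingleton.elim a b
    refine ⟨⟨Equiv.refl _, Iff.rfl⟩, (φ (0, 0)).2, ?_⟩
    rintro ⟨v, i⟩
    rcases hz2cases i with rfl | rfl
    · have hv : ((v, (0 : ZMod 2)) : ZMod 1 × ZMod 2) = (0, 0) := by
        rw [huniq v 0]
      refine Prod.ext (huniq _ _) ?_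
      rw [hv, zero_add]
    · have hv : ((v, (1 : ZMod 2)) : ZMod 1 × ZMod 2) = (0, 1) := by
        rw [huniq v 0]
      refine Prod.ext (huniq _ _) ?_
      rw [hv]
      have hne : φ (0, 1) ≠ φ (0, 0) := by
        intro hcontra
        have := φ.toEquiv.injective hcontra
        exact absurd (congrArg Prod.snd this) (by decide)
      have hsne : (φ (0, 0)).2 ≠ (φ ((0 : ZMod 1), (1 : ZMod 2))).2 := by
        intro hs
        exact hne (Prod.ext (huniq _ _) hs.symm)
      have := TwoFoldAux.zmod2_succ_of_ne hsne
      rw [this]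
      ring
  · -- main case : m ≥ 2
    haveI : Fact (1 < m) := ⟨by omega⟩
    have hSne : ∃ s₀, s₀ ∈ S := by
      by_contra hS
      push_neg at hS
      have h01 : (0 : ZMod m) ≠ 1 := zero_ne_one
      have hnoadj : ∀ a b : ZMod m, ¬ (circulantGraph S).Adj a b := by
        intro a b hab
        rw [circulantGraph_adj] at hab
        rcases hab.2 with h' | h' <;> exact hS _ h'
      obtain ⟨p⟩ := hconn.preconnected 0 1
      have hwalk : ∀ {a b : ZMod m}, (circulantGraph S).Walk a b → a = b := by
        intro a b q
        induction q with
        | nil => rfl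
        | cons h _ _ => exact absurd h (hnoadj _ _)
      exact h01 (hwalk p)
    obtain ⟨s₀, hs₀⟩ := hSne
    have Bconn := TwoFoldAux.tensor_connected hodd hS0 hconn hs₀
    set ε : ZMod 2 := (φ (0, 0)).2 with hε
    have layer : ∀ p : ZMod m × ZMod 2, (φ p).2 = p.2 + ε := by
      intro p
      obtain ⟨W⟩ := Bconn.preconnected (0, 0) p
      have h1 : p.2 = (W.length : ZMod 2) := by
        have := TwoFoldAux.tensor_walk_parity W
        simpa using this
      have h2' := TwoFoldAux.tensor_walk_parity (W.map φ.toHom)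
      rw [SimpleGraph.Walk.length_map] at h2'
      calc (φ p).2 = (φ (0, 0)).2 + (W.length : ZMod 2) := h2'
      _ = p.2 + ε := by rw [← h1, hε]; ring
    have hbij : ∀ i : ZMod 2, Function.Bijective (fun v : ZMod m => (φ (v, i)).1) := by
      intro i
      constructor
      · intro a b hab
        have h2a : (φ (a, i)).2 = (φ (b, i)).2 := by rw [layer (a, i), layer (b, i)]
        have := φ.toEquiv.injective (Prod.ext hab h2a)
        exact congrArg Prod.fst this
      · intro u
        refine ⟨(φ.symm (u, i + ε)).1, ?_⟩
        have happ : φ (φ.symm (u, i + ε)) = (u, i + ε) := φ.apply_symm_apply _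
        have hp2 : (φ.symm (u, i + ε)).2 = i := by
          have hl := layer (φ.symm (u, i + ε))
          rw [happ] at hl
          exact add_right_cancel hl.symm
        have hpair : (((φ.symm (u, i + ε)).1, i) : ZMod m × ZMod 2)
            = φ.symm (u, i + ε) := Prod.ext rfl hp2.symm
        show (φ ((φ.symm (u, i + ε)).1, i)).1 = u
        rw [hpair, happ]
    set σe₀ : Equiv.Perm (ZMod m) := Equiv.ofBijective _ (hbij 0) with hσe₀
    set σe₁ : Equiv.Perm (ZMod m) := Equiv.ofBijective _ (hbij 1) with hσe₁
    have htf : IsTwoFoldAuto (circulantGraph S) σe₀ σe₁ := by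
      intro v w
      constructor
      · intro hadj
        have h1 : (tensorK2 (circulantGraph S)).Adj (v, 0) (w, 1) :=
          ⟨hadj, show (0 : ZMod 2) ≠ 1 by decide⟩
        have h2 := φ.map_adj_iff.mpr h1
        exact h2.1
      · intro hadj
        have h1 : (tensorK2 (circulantGraph S)).Adj (φ (v, 0)) (φ (w, 1)) := by
          refine ⟨hadj, ?_⟩
          rw [layer (v, 0), layer (w, 1)]
          show (0 : ZMod 2) + ε ≠ 1 + ε
          exact (by decide : ∀ e : ZMod 2, (0 : ZMod 2) + e ≠ 1 + e) ε
        exact (φ.map_adj_iff.mp h1).1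
    have hσ : σe₀ = σe₁ := core σe₀ σe₁ htf
    have hmap : ∀ {a b : ZMod m}, (circulantGraph S).Adj (σe₀ a) (σe₀ b)
        ↔ (circulantGraph S).Adj a b := by
      intro a b
      have := htf a b
      rw [← hσ] at this
      exact this.symm
    refine ⟨⟨σe₀, hmap⟩, ε, ?_⟩
    rintro ⟨v, i⟩
    refine Prod.ext ?_ (layer (v, i))
    rcases hz2cases i with rfl | rfl
    · rfl
    · show (φ (v, 1)).1 = σe₀ v
      rw [hσ]
      rfl
end
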